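/- arXiv:1901.10247 — 4 statements merged into one kernel-verified Lean document; each statement's English description precedes it below -/
import Mathlib

section
/- (Kotzig's theorem.) Let G be a finite nonempty graph that admits a unique perfect matching M. Then M contains a bridge of G, i.e., there exists an edge e ∈ M whose removal increases the number of connected components of G. -/
/-!
If no edge of the unique perfect matching `M` is a bridge, every vertex has an edge outside `M`,
so an `M`-alternating walk can be continued forever; its first self-intersection closes an
alternating cycle. An even one yields a second perfect matching. An odd one is a blossom: a
factor-critical vertex set whose base is matched outside it. Contracting the blossom to its base
gives a smaller graph in which the image of `M` is still the unique perfect matching, since every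
perfect matching of the contraction extends through the blossom; and a bridge of the contraction
in the image of `M` is a bridge of `G`. Induction on the number of vertices finishes the proof.
-/

def IsPerfectMatchingOf {V : Type*} (G : SimpleGraph V) (M : Set (Sym2 V)) : Prop :=
  M ⊆ G.edgeSet ∧ ∀ v : V, ∃! e, e ∈ M ∧ v ∈ e

open SimpleGraph Function

section Matching

variable {V W : Type*} {G : SimpleGraph V} {M N N₁ N₂ : Set (Sym2 V)} {S S₁ S₂ : Set V}

structure IsPerfectMatchingOn (G : SimpleGraph V) (N : Set (Sym2 V)) (S : Set V) : Prop where
  subset_edgeSet : N ⊆ G.edgeSet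
  mem_of_mem : ∀ e ∈ N, ∀ v ∈ e, v ∈ S
  existsUnique : ∀ v ∈ S, ∃! e, e ∈ N ∧ v ∈ e

theorem isPerfectMatchingOf_iff_isPerfectMatchingOn_univ :
    IsPerfectMatchingOf G M ↔ IsPerfectMatchingOn G M Set.univ :=
  ⟨fun h => ⟨h.1, fun _ _ _ _ => trivial, fun v _ => h.2 v⟩,
    fun h => ⟨h.subset_edgeSet, fun v => h.existsUnique v trivial⟩⟩

theorem IsPerfectMatchingOn.union (h₁ : IsPerfectMatchingOn G N₁ S₁)
    (h₂ : IsPerfectMatchingOn G N₂ S₂) (hS : Disjoint S₁ S₂) :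
    IsPerfectMatchingOn G (N₁ ∪ N₂) (S₁ ∪ S₂) := by
  refine ⟨Set.union_subset h₁.subset_edgeSet h₂.subset_edgeSet, ?_, ?_⟩
  · rintro e (he | he) v hv
    exacts [Or.inl (h₁.mem_of_mem e he v hv), Or.inr (h₂.mem_of_mem e he v hv)]
  · rintro v (hv | hv)
    · obtain ⟨e, he, huniq⟩ := h₁.existsUnique v hv
      refine ⟨e, ⟨Or.inl he.1, he.2⟩, ?_⟩
      rintro e' ⟨he' | he', hve'⟩
      · exact huniq e' ⟨he', hve'⟩
      · exact absurd (h₂.mem_of_mem e' he' v hve') (hS.notMem_of_mem_left hv)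
    · obtain ⟨e, he, huniq⟩ := h₂.existsUnique v hv
      refine ⟨e, ⟨Or.inr he.1, he.2⟩, ?_⟩
      rintro e' ⟨he' | he', hve'⟩
      · exact absurd (h₁.mem_of_mem e' he' v hve') (hS.notMem_of_mem_right hv)
      · exact huniq e' ⟨he', hve'⟩

theorem IsPerfectMatchingOn.mem_of_subset (h : IsPerfectMatchingOn G N S)
    (h₁ : IsPerfectMatchingOn G N₁ S₁) (hsub : N₁ ⊆ N) {e : Sym2 V} (he : e ∈ N) {v : V}
    (hve : v ∈ e) (hv : v ∈ S₁) : e ∈ N₁ := by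
  obtain ⟨e₁, he₁, -⟩ := h₁.existsUnique v hv
  obtain ⟨e', -, huniq⟩ := h.existsUnique v (h.mem_of_mem e he v hve)
  rw [huniq e ⟨he, hve⟩, ← huniq e₁ ⟨hsub he₁.1, he₁.2⟩]
  exact he₁.1

theorem IsPerfectMatchingOn.diff (h : IsPerfectMatchingOn G N S)
    (h₁ : IsPerfectMatchingOn G N₁ S₁) (hsub : N₁ ⊆ N) :
    IsPerfectMatchingOn G (N \ N₁) (S \ S₁) := by
  refine ⟨Set.sdiff_subset.trans h.subset_edgeSet, ?_, ?_⟩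
  · rintro e ⟨he, he₁⟩ v hv
    exact ⟨h.mem_of_mem e he v hv, fun hv₁ => he₁ (h.mem_of_subset h₁ hsub he hv hv₁)⟩
  · rintro v ⟨hv, hv₁⟩
    obtain ⟨e, he, huniq⟩ := h.existsUnique v hv
    refine ⟨e, ⟨⟨he.1, fun he₁ => hv₁ (h₁.mem_of_mem e he₁ v he.2)⟩, he.2⟩, ?_⟩
    rintro e' ⟨he', hve'⟩
    exact huniq e' ⟨he'.1, hve'⟩

theorem IsPerfectMatchingOn.eq_of_subset (h : IsPerfectMatchingOn G N S)
    (h₁ : IsPerfectMatchingOn G N₁ S) (hsub : N₁ ⊆ N) : N₁ = N :=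
  hsub.antisymm fun e he =>
    h.mem_of_subset h₁ hsub he e.out_fst_mem (h.mem_of_mem e he _ e.out_fst_mem)

theorem isPerfectMatchingOn_edge {x y : V} (h : G.Adj x y) :
    IsPerfectMatchingOn G {s(x, y)} {x, y} := by
  refine ⟨by simpa using h, by simp, ?_⟩
  rintro v hv
  exact ⟨s(x, y), ⟨rfl, by simpa using hv⟩, fun e he => he.1⟩

theorem IsPerfectMatchingOn.image {G' : SimpleGraph W} {N' : Set (Sym2 W)} {T : Set W}
    (h : IsPerfectMatchingOn G' N' T) {f : W → V} (hf : Injective f)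
    (hadj : ∀ e ∈ N', Sym2.map f e ∈ G.edgeSet) :
    IsPerfectMatchingOn G (Sym2.map f '' N') (f '' T) := by
  refine ⟨Set.image_subset_iff.2 hadj, ?_, ?_⟩
  · rintro _ ⟨e, he, rfl⟩ v hv
    obtain ⟨a, ha, rfl⟩ := Sym2.mem_map.1 hv
    exact Set.mem_image_of_mem f (h.mem_of_mem e he a ha)
  · rintro _ ⟨a, ha, rfl⟩
    obtain ⟨e, he, huniq⟩ := h.existsUnique a ha
    refine ⟨Sym2.map f e, ⟨Set.mem_image_of_mem _ he.1, Sym2.mem_map.2 ⟨a, he.2, rfl⟩⟩, ?_⟩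
    rintro _ ⟨⟨e', he', rfl⟩, hae'⟩
    obtain ⟨a', ha', hfa⟩ := Sym2.mem_map.1 hae'
    rw [huniq e' ⟨he', hf hfa ▸ ha'⟩]

theorem IsPerfectMatchingOf.eq_of_mem (hM : IsPerfectMatchingOf G M) {v a b : V}
    (ha : s(v, a) ∈ M) (hb : s(v, b) ∈ M) : a = b := by
  obtain ⟨e, -, huniq⟩ := hM.2 v
  exact Sym2.congr_right.1 ((huniq _ ⟨ha, Sym2.mem_mk_left _ _⟩).trans
    (huniq _ ⟨hb, Sym2.mem_mk_left _ _⟩).symm)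

theorem IsPerfectMatchingOf.exists_adj_notMem (hM : IsPerfectMatchingOf G M)
    (hno : ∀ e ∈ M, ¬ G.IsBridge e) (v : V) : ∃ u, G.Adj v u ∧ s(v, u) ∉ M := by
  obtain ⟨e, ⟨he, hve⟩, -⟩ := hM.2 v
  obtain ⟨p, rfl⟩ := Sym2.mem_iff_exists.1 hve
  by_contra! h
  refine hno _ he (isBridge_iff.2 fun ⟨w⟩ => ?_)
  cases w with
  | nil => exact (hM.1 he).ne rfl
  | cons hvu _ =>
    rw [deleteEdges_adj, Set.mem_singleton_iff] at hvu
    exact hvu.2 (by rw [hM.eq_of_mem (h _ hvu.1) he])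

end Matching

namespace ZMod

variable {n : ℕ}

theorem odd_val_neg_one_iff [Fact (1 < n)] : Odd (-1 : ZMod n).val ↔ Even n := by
  have : NeZero (1 : ZMod n) := ⟨one_ne_zero⟩
  rw [val_neg_of_ne_zero, val_one, Nat.odd_sub (Fact.out : 1 < n).le]
  simp [← Nat.not_odd_iff_even]

theorem odd_val_sub_one_iff [Fact (1 < n)] {x : ZMod n} (hx : x ≠ 0) :
    Odd (x - 1).val ↔ ¬ Odd x.val := by
  have hpos : 0 < x.val := (val_pos).2 hx
  rw [val_sub (by rw [val_one]; omega), val_one, Nat.odd_sub hpos]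
  simp [Nat.not_odd_iff_even]

end ZMod

section Cycle

variable {V : Type*} {G : SimpleGraph V} {M : Set (Sym2 V)} {n : ℕ} {c : ZMod n → V}

def cycleMatching (c : ZMod n → V) (i : ZMod n) : Set (Sym2 V) :=
  {e | ∃ k, Odd (k - i).val ∧ s(c k, c (k + 1)) = e}

theorem mem_cycle_edge_iff (hc : Injective c) {j k : ZMod n} :
    c j ∈ s(c k, c (k + 1)) ↔ k = j ∨ k = j - 1 := by
  rw [Sym2.mem_iff, hc.eq_iff, hc.eq_iff, eq_sub_iff_add_eq]
  tauto

theorem isPerfectMatchingOn_cycleMatching [Fact (1 < n)] (hc : Injective c)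
    (hadj : ∀ k, G.Adj (c k) (c (k + 1))) (i : ZMod n) :
    IsPerfectMatchingOn G (cycleMatching c i) {v | ∃ k, c k = v ∧ (k ≠ i ∨ Even n)} := by
  refine ⟨?_, ?_, ?_⟩
  · rintro _ ⟨k, -, rfl⟩
    exact hadj k
  · rintro _ ⟨k, hk, rfl⟩ v hv
    rcases Sym2.mem_iff.1 hv with rfl | rfl
    · refine ⟨k, rfl, Or.inl ?_⟩
      rintro rfl
      simp at hk
    · refine ⟨k + 1, rfl, ?_⟩
      by_cases hki : k + 1 = i
      · rw [← hki, sub_add_cancel_left, ZMod.odd_val_neg_one_iff] at hk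
        exact Or.inr hk
      · exact Or.inl hki
  · rintro _ ⟨j, rfl, hj⟩
    have hparity : Odd (j - 1 - i).val ↔ ¬ Odd (j - i).val := by
      rw [sub_right_comm]
      by_cases hji : j - i = 0
      · rw [hji, zero_sub, ZMod.odd_val_neg_one_iff, ZMod.val_zero]
        rw [sub_eq_zero] at hji
        simpa [hji] using hj
      · exact ZMod.odd_val_sub_one_iff hji
    have hunique : ∀ k k', Odd (k - i).val → Odd (k' - i).val → (k = j ∨ k = j - 1) →
        (k' = j ∨ k' = j - 1) → k = k' := by
      rintro k k' hk hk' (rfl | rfl) (rfl | rfl) <;> first | rfl | tauto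
    have hk : ∃ k, Odd (k - i).val ∧ (k = j ∨ k = j - 1) := by
      by_cases hodd : Odd (j - i).val
      exacts [⟨j, hodd, Or.inl rfl⟩, ⟨j - 1, hparity.2 hodd, Or.inr rfl⟩]
    obtain ⟨k, hk, hkj⟩ := hk
    refine ⟨s(c k, c (k + 1)), ⟨⟨k, hk, rfl⟩, (mem_cycle_edge_iff hc).2 hkj⟩, ?_⟩
    rintro _ ⟨⟨k', hk', rfl⟩, hk'j⟩
    rw [hunique k' k hk' hk ((mem_cycle_edge_iff hc).1 hk'j) hkj]

structure IsAltCycle (G : SimpleGraph V) (M : Set (Sym2 V)) (c : ZMod n → V) : Prop where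
  injective : Injective c
  adj : ∀ k, G.Adj (c k) (c (k + 1))
  mem_iff : ∀ k, s(c k, c (k + 1)) ∈ M ↔ Odd k.val

namespace IsAltCycle

variable (hc : IsAltCycle G M c)
include hc

theorem one_lt [NeZero n] : 1 < n := by
  by_contra h
  have : n = 1 := by have := NeZero.ne n; omega
  subst this
  exact (hc.adj 0).ne (congrArg c (Subsingleton.elim _ _))

theorem cycleMatching_zero_subset : cycleMatching c 0 ⊆ M := by
  rintro _ ⟨k, hk, rfl⟩
  rw [sub_zero] at hk
  exact (hc.mem_iff k).2 hk

theorem exists_isPerfectMatchingOf_ne [NeZero n] (hM : IsPerfectMatchingOf G M) (hn : Even n) :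
    ∃ N, IsPerfectMatchingOf G N ∧ N ≠ M := by
  have : Fact (1 < n) := ⟨hc.one_lt⟩
  have hcycle (i : ZMod n) : IsPerfectMatchingOn G (cycleMatching c i) (Set.range c) := by
    convert isPerfectMatchingOn_cycleMatching hc.injective hc.adj i using 1
    ext; simp [hn]
  rw [isPerfectMatchingOf_iff_isPerfectMatchingOn_univ] at hM
  refine ⟨(M \ cycleMatching c 0) ∪ cycleMatching c 1, ?_, fun h => ?_⟩
  · rw [isPerfectMatchingOf_iff_isPerfectMatchingOn_univ]
    simpa using (hM.diff (hcycle 0) hc.cycleMatching_zero_subset).union (hcycle 1)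
      Set.disjoint_sdiff_left
  · have h01 : s(c 0, c (0 + 1)) ∈ cycleMatching c 1 :=
      ⟨0, by simpa [ZMod.odd_val_neg_one_iff], rfl⟩
    simpa using (hc.mem_iff 0).1 (h ▸ Or.inr h01)

end IsAltCycle

/-- What contraction needs from an Edmonds blossom, i.e. an odd alternating cycle
(`IsAltCycle.isBlossom`). -/
structure IsBlossom (G : SimpleGraph V) (M : Set (Sym2 V)) (S : Set V) (s : V) : Prop where
  base_mem : s ∈ S
  exists_ne_base : ∃ x ∈ S, x ≠ s
  factorCritical : ∀ x ∈ S, ∃ N, IsPerfectMatchingOn G N (S \ {x})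
  base_matching : ∃ N ⊆ M, IsPerfectMatchingOn G N (S \ {s})

theorem IsAltCycle.isBlossom [NeZero n] (hc : IsAltCycle G M c) (hn : Odd n) :
    IsBlossom G M (Set.range c) (c 0) := by
  have : Fact (1 < n) := ⟨hc.one_lt⟩
  have hcycle (i : ZMod n) :
      IsPerfectMatchingOn G (cycleMatching c i) (Set.range c \ {c i}) := by
    convert isPerfectMatchingOn_cycleMatching hc.injective hc.adj i using 1
    ext v
    simp only [← Nat.not_odd_iff_even, hn, not_true, or_false]
    constructor
    · rintro ⟨⟨k, rfl⟩, hk⟩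
      exact ⟨k, rfl, fun h => hk (h ▸ rfl)⟩
    · rintro ⟨k, rfl, hk⟩
      exact ⟨⟨k, rfl⟩, hc.injective.ne hk⟩
  refine ⟨⟨0, rfl⟩, ⟨c 1, ⟨1, rfl⟩, hc.injective.ne one_ne_zero⟩, ?_,
    ⟨_, hc.cycleMatching_zero_subset, hcycle 0⟩⟩
  rintro _ ⟨i, rfl⟩
  exact ⟨_, hcycle i⟩

end Cycle

section Blossom

variable {V : Type*} {G : SimpleGraph V} {M N₀ : Set (Sym2 V)} {S : Set V} {s x w : V}

namespace IsBlossom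

variable (hB : IsBlossom G M S s) (hM : IsPerfectMatchingOf G M)
include hB hM

theorem mem_of_mem_edge {e : Sym2 V} (he : e ∈ M) {v : V} (hve : v ∈ e) (hv : v ∈ S \ {s})
    (hwe : w ∈ e) : w ∈ S \ {s} := by
  obtain ⟨N, hNM, hN⟩ := hB.base_matching
  rw [isPerfectMatchingOf_iff_isPerfectMatchingOn_univ] at hM
  exact hN.mem_of_mem e (hM.mem_of_subset hN hNM he hve hv) w hwe

omit hM in
theorem exists_isPerfectMatchingOf_of_adj (hx : x ∈ S) (hw : w ∉ S) (hxw : G.Adj x w)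
    (hN₀ : IsPerfectMatchingOn G N₀ (S ∪ {w})ᶜ) :
    ∃ N, IsPerfectMatchingOf G N ∧ s(x, w) ∈ N ∧ N₀ ⊆ N := by
  obtain ⟨Nx, hNx⟩ := hB.factorCritical x hx
  refine ⟨N₀ ∪ {s(x, w)} ∪ Nx, ?_, by simp, fun e he => Or.inl (Or.inl he)⟩
  rw [isPerfectMatchingOf_iff_isPerfectMatchingOn_univ]
  convert (hN₀.union (isPerfectMatchingOn_edge hxw) ?_).union hNx ?_ using 1
  · ext v
    by_cases hvS : v ∈ S <;> by_cases hvx : v = x <;> by_cases hvw : v = w <;> simp_all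
  · rw [Set.disjoint_left]
    rintro v hv (rfl | rfl) <;> simp_all
  · rw [Set.disjoint_left]
    rintro v (hv | rfl | rfl) hvS <;> simp_all

theorem not_adj_base_partner (huniq : ∀ N, IsPerfectMatchingOf G N → N = M) {b : V}
    (hb : s(s, b) ∈ M) (hx : x ∈ S) (hxs : x ≠ s) : ¬ G.Adj x b := by
  intro hxb
  have hbS : b ∉ S := fun hbS =>
    (hB.mem_of_mem_edge hM hb (Sym2.mem_mk_right _ _)
      ⟨hbS, (hM.1 hb).ne.symm⟩ (Sym2.mem_mk_left _ _)).2 rfl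
  obtain ⟨Ns, hNsM, hNs⟩ := hB.base_matching
  have hN₀ : IsPerfectMatchingOn G (M \ (Ns ∪ {s(s, b)})) (S ∪ {b})ᶜ := by
    rw [isPerfectMatchingOf_iff_isPerfectMatchingOn_univ] at hM
    convert hM.diff (hNs.union (isPerfectMatchingOn_edge (hM.subset_edgeSet hb)) ?_)
      (Set.union_subset hNsM (by simpa using hb)) using 1
    · ext v
      by_cases hvs : v = s <;> simp_all [hB.base_mem]
    · simp [hbS]
  obtain ⟨N, hN, hxbN, -⟩ := hB.exists_isPerfectMatchingOf_of_adj hx hbS hxb hN₀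
  rw [huniq N hN] at hxbN
  exact hbS (hB.mem_of_mem_edge hM hxbN (Sym2.mem_mk_left _ _) ⟨hx, hxs⟩
    (Sym2.mem_mk_right _ _)).1

end IsBlossom

end Blossom

section Contraction

variable {V : Type*} {G : SimpleGraph V} {M : Set (Sym2 V)} {S : Set V} {s u : V}

theorem SimpleGraph.Reachable.of_map_le {W : Type*} {H : SimpleGraph V} {H' : SimpleGraph W}
    {f : V → W} (hle : H.map f ≤ H') {v : V} (h : H.Reachable u v) :
    H'.Reachable (f u) (f v) := by
  rw [reachable_iff_reflTransGen] at h ⊢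
  refine Relation.ReflTransGen.lift' f (fun a b hab => ?_) _ _ h
  by_cases hf : f a = f b
  · exact (hf ▸ Relation.ReflTransGen.refl : Relation.ReflTransGen H'.Adj (f a) (f b))
  · exact .single (hle (map_adj_apply' hab hf))

theorem SimpleGraph.isBridge_of_isBridge_map {W : Type*} {f : V → W} {x y : V}
    (hbr : (G.map f).IsBridge s(f x, f y))
    (h : ∀ u v, G.Adj u v → s(f u, f v) = s(f x, f y) → s(u, v) = s(x, y)) :
    G.IsBridge s(x, y) := by
  rw [isBridge_iff] at hbr ⊢
  refine fun hr => hbr (hr.of_map_le ?_)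
  rintro _ _ ⟨hne, u, v, huv, rfl, rfl⟩
  simp only [deleteEdges_adj, Set.mem_singleton_iff] at huv ⊢
  exact ⟨map_adj_apply' huv.1 hne, fun he => huv.2 (h u v huv.1 he)⟩

abbrev Contraction (S : Set V) (s : V) : Type _ := {v : V // v ∈ S → v = s}

open scoped Classical in
noncomputable def contract (S : Set V) (s v : V) : Contraction S s :=
  if h : v ∈ S then ⟨s, fun _ => rfl⟩ else ⟨v, fun hv => absurd hv h⟩

theorem coe_contract_of_mem (h : u ∈ S) : (contract S s u : V) = s := by
  simp [contract, h]

theorem coe_contract_of_notMem (h : u ∉ S) : (contract S s u : V) = u := by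
  simp [contract, h]

theorem contract_coe (w : Contraction S s) : contract S s w = w := by
  by_cases h : (w : V) ∈ S
  · exact Subtype.ext ((coe_contract_of_mem h).trans (w.2 h).symm)
  · exact Subtype.ext (coe_contract_of_notMem h)

theorem mem_of_coe_contract_eq (hs : s ∈ S) (h : (contract S s u : V) = s) : u ∈ S := by
  by_contra hu
  rw [coe_contract_of_notMem hu] at h
  exact hu (h ▸ hs)

theorem eq_coe_of_contract_eq {w : Contraction S s} (h : contract S s u = w) (hw : (w : V) ≠ s) :
    u = w := by
  by_cases hu : u ∈ S
  · exact absurd (h ▸ coe_contract_of_mem hu) hw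
  · rw [← h, coe_contract_of_notMem hu]

theorem adj_coe_of_map_contract_adj {a b : Contraction S s} (h : (G.map (contract S s)).Adj a b)
    (ha : (a : V) ≠ s) (hb : (b : V) ≠ s) : G.Adj a b := by
  obtain ⟨-, u, v, huv, rfl, rfl⟩ := h
  rwa [← eq_coe_of_contract_eq rfl ha, ← eq_coe_of_contract_eq rfl hb]

theorem isPerfectMatchingOn_lift {N' : Set (Sym2 (Contraction S s))} (hs : s ∈ S)
    (hN' : IsPerfectMatchingOf (G.map (contract S s)) N') {w : Contraction S s}
    (hw : s(contract S s s, w) ∈ N') :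
    IsPerfectMatchingOn G (Sym2.map Subtype.val '' (N' \ {s(contract S s s, w)}))
      (S ∪ {(w : V)})ᶜ := by
  have hs' : ((contract S s s : Contraction S s) : V) = s := coe_contract_of_mem hs
  rw [isPerfectMatchingOf_iff_isPerfectMatchingOn_univ] at hN'
  have hN'w := hN'.diff (isPerfectMatchingOn_edge (hN'.subset_edgeSet hw))
    (Set.singleton_subset_iff.2 hw)
  convert hN'w.image Subtype.val_injective ?_ using 1
  · ext v
    simp only [Set.mem_compl_iff, Set.mem_union, Set.mem_singleton_iff, not_or, Set.mem_image,
      Set.mem_sdiff, Set.mem_univ, Set.mem_insert_iff, true_and]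
    constructor
    · rintro ⟨hvS, hvw⟩
      refine ⟨⟨v, fun h => absurd h hvS⟩, ⟨fun h => ?_, fun h => hvw (h ▸ rfl)⟩, rfl⟩
      have hvs : v = s := (congrArg Subtype.val h).trans hs'
      exact hvS (hvs ▸ hs)
    · rintro ⟨a, ⟨has, haw⟩, rfl⟩
      exact ⟨fun haS => has (Subtype.ext ((a.2 haS).trans hs'.symm)),
        fun h => haw (Subtype.ext h)⟩
  · have hne : ∀ e ∈ N', e ≠ s(contract S s s, w) → ∀ a ∈ e, (a : V) ≠ s := by
      intro e he hew a hae has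
      have ha : a = contract S s s := Subtype.ext (has.trans hs'.symm)
      obtain ⟨e₀, -, huniq⟩ := hN'.existsUnique a trivial
      exact hew ((huniq e ⟨he, hae⟩).trans (huniq _ ⟨hw, ha ▸ Sym2.mem_mk_left _ _⟩).symm)
    rintro e ⟨he, hew⟩
    induction e using Sym2.ind with
    | h a b =>
    exact adj_coe_of_map_contract_adj (hN'.subset_edgeSet he)
      (hne _ he hew a (Sym2.mem_mk_left _ _)) (hne _ he hew b (Sym2.mem_mk_right _ _))

namespace IsBlossom

variable (hB : IsBlossom G M S s) (hM : IsPerfectMatchingOf G M)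
include hB hM

theorem isPerfectMatchingOf_contract :
    IsPerfectMatchingOf (G.map (contract S s)) (Sym2.map Subtype.val ⁻¹' M) := by
  refine ⟨fun e he => ?_, fun w => ?_⟩
  · induction e using Sym2.ind with
    | h a b =>
    have hab : G.Adj a b := hM.1 he
    have := map_adj_apply' (f := contract S s) hab
      (by rw [contract_coe, contract_coe]; exact fun h => hab.ne (congrArg _ h))
    rwa [contract_coe, contract_coe] at this
  · obtain ⟨e, ⟨he, hwe⟩, huniq⟩ := hM.2 w
    obtain ⟨p, rfl⟩ := Sym2.mem_iff_exists.1 hwe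
    have hp : p ∈ S → p = s := fun hpS => by
      by_contra hps
      have := hB.mem_of_mem_edge hM he (Sym2.mem_mk_right _ _) ⟨hpS, hps⟩ (Sym2.mem_mk_left _ _)
      exact this.2 (w.2 this.1)
    refine ⟨s(w, ⟨p, hp⟩), ⟨he, Sym2.mem_mk_left _ _⟩, ?_⟩
    rintro e' ⟨he', hwe'⟩
    apply Sym2.map.injective Subtype.val_injective
    rw [huniq _ ⟨he', Sym2.mem_map.2 ⟨w, hwe', rfl⟩⟩]
    rfl

theorem eq_of_isPerfectMatchingOf_contract (huniq : ∀ N, IsPerfectMatchingOf G N → N = M)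
    (N' : Set (Sym2 (Contraction S s))) (hN' : IsPerfectMatchingOf (G.map (contract S s)) N') :
    N' = Sym2.map Subtype.val ⁻¹' M := by
  obtain ⟨e₀, ⟨he₀, hse₀⟩, -⟩ := hN'.2 (contract S s s)
  obtain ⟨w, rfl⟩ := Sym2.mem_iff_exists.1 hse₀
  have hs' : ((contract S s s : Contraction S s) : V) = s := coe_contract_of_mem hB.base_mem
  have hadj : (G.map (contract S s)).Adj (contract S s s) w := hN'.1 he₀
  obtain ⟨hne, x, y, hxy, hx, hy⟩ := hadj
  have hxS : x ∈ S := mem_of_coe_contract_eq hB.base_mem (hx ▸ hs')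
  have hyS : y ∉ S := fun hyS =>
    hne ((Subtype.ext ((coe_contract_of_mem hyS).trans hs'.symm)).symm.trans hy)
  have hyw : y = w := by rw [← hy, coe_contract_of_notMem hyS]
  subst hyw
  obtain ⟨N, hN, hxyN, hN₀N⟩ := hB.exists_isPerfectMatchingOf_of_adj hxS hyS hxy
    (isPerfectMatchingOn_lift hB.base_mem hN' he₀)
  rw [huniq N hN] at hxyN hN₀N
  have hxs : x = s := by
    by_contra hxs
    exact hyS (hB.mem_of_mem_edge hM hxyN (Sym2.mem_mk_left _ _) ⟨hxS, hxs⟩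
      (Sym2.mem_mk_right _ _)).1
  rw [isPerfectMatchingOf_iff_isPerfectMatchingOn_univ] at hN'
  refine (((isPerfectMatchingOf_iff_isPerfectMatchingOn_univ).1
    (hB.isPerfectMatchingOf_contract hM)).eq_of_subset hN' fun e he => ?_)
  by_cases hew : e = s(contract S s s, w)
  · rw [hxs] at hxyN
    simpa [hew, hs'] using hxyN
  · exact hN₀N ⟨e, ⟨he, hew⟩, rfl⟩

theorem isBridge_of_contract (huniq : ∀ N, IsPerfectMatchingOf G N → N = M)
    {a b : Contraction S s} (hab : s((a : V), b) ∈ M)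
    (hbr : (G.map (contract S s)).IsBridge s(a, b)) : G.IsBridge s((a : V), b) := by
  -- An edge mapped onto `s(a, b)` avoids `S \ {s}`: the partner of `s` has no neighbour there.
  have key : ∀ {a b : Contraction S s}, s((a : V), b) ∈ M → ∀ {u v}, G.Adj u v →
      contract S s u = a → contract S s v = b → (contract S s u : V) = u := by
    intro a b hab u v huv hu hv
    by_contra h
    have huS : u ∈ S := by
      by_contra huS
      exact h (coe_contract_of_notMem huS)
    have hus : u ≠ s := fun hus => h ((coe_contract_of_mem huS).trans hus.symm)
    have ha : (a : V) = s := hu ▸ coe_contract_of_mem huS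
    have hvS : v ∉ S := fun hvS =>
      (hM.1 hab).ne (ha.trans (hv ▸ coe_contract_of_mem hvS).symm)
    have hvb : v = b := hv ▸ (coe_contract_of_notMem hvS).symm
    rw [ha] at hab
    exact hB.not_adj_base_partner hM huniq hab huS hus (hvb ▸ huv)
  have hba : s((b : V), a) ∈ M := Sym2.eq_swap ▸ hab
  refine isBridge_of_isBridge_map (f := contract S s) (by rwa [contract_coe, contract_coe])
    fun u v huv h => ?_
  rw [contract_coe, contract_coe] at h
  obtain ⟨hu, hv⟩ | ⟨hu, hv⟩ := Sym2.eq_iff.1 h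
  · rw [← key hab huv hu hv, ← key hba huv.symm hv hu, hu, hv]
  · rw [← key hba huv hu hv, ← key hab huv.symm hv hu, hu, hv, Sym2.eq_swap]

end IsBlossom

end Contraction

section Walk

variable {V : Type*} {G : SimpleGraph V} {M : Set (Sym2 V)} {n : ℕ}

def altWalk (p q : V → V) (v : V) : ℕ → V
  | 0 => v
  | k + 1 => (if Even k then p else q) (altWalk p q v k)

theorem isAltCycle_of_periodic [NeZero n] {w : ℕ → V} (hadj : ∀ k, G.Adj (w k) (w (k + 1)))
    (hmem : ∀ k, s(w k, w (k + 1)) ∈ M ↔ Even k) {a : ℕ} (ha : Odd a) (hper : w (a + n) = w a)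
    (hinj : ∀ x < n, ∀ y < n, w (a + x) = w (a + y) → x = y) :
    IsAltCycle G M fun k : ZMod n => w (a + k.val) := by
  have hsucc (k : ZMod n) : w (a + (k + 1).val) = w (a + k.val + 1) := by
    rw [ZMod.val_add, ZMod.val_one_eq_one_mod, Nat.add_mod_mod]
    rcases (Nat.succ_le_of_lt k.val_lt).lt_or_eq with h | h
    · rw [Nat.mod_eq_of_lt h, add_assoc]
    · rw [← Nat.succ_eq_add_one, h, Nat.mod_self, add_zero, add_assoc, ← Nat.succ_eq_add_one, h,
        hper]
  refine ⟨fun k l h => ZMod.val_injective n (hinj _ k.val_lt _ l.val_lt h), fun k => ?_,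
    fun k => ?_⟩
  · simpa only [hsucc] using hadj (a + k.val)
  · simp only [hsucc, hmem, ← Nat.not_odd_iff_even, Nat.odd_add', ha]
    tauto

section Repeat

variable (hM : IsPerfectMatchingOf G M) {w : ℕ → V}
  (hadj : ∀ k, G.Adj (w k) (w (k + 1))) (hmem : ∀ k, s(w k, w (k + 1)) ∈ M ↔ Even k)
  {j k : ℕ} (hj : j < k) (hwj : w j = w k) (hinj : ∀ x < k, ∀ y < k, w x = w y → x = y)
include hM hadj hmem hj hwj hinj

theorem even_of_first_repeat : Even k := by
  by_contra hk
  obtain ⟨m, hm⟩ : ∃ m, k = m + 1 := ⟨k - 1, by omega⟩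
  have hmeven : Even m := by rwa [hm, Nat.even_add_one, not_not] at hk
  have h1 : s(w k, w m) ∈ M := by rw [Sym2.eq_swap, hm]; exact (hmem m).2 hmeven
  -- `w k = w j` would have a second `M`-partner among `w 0, …, w (k - 1)`.
  rcases Nat.even_or_odd j with hj' | ⟨i, rfl⟩
  · have h2 : s(w k, w (j + 1)) ∈ M := hwj ▸ (hmem j).2 hj'
    have hjk : j + 1 ≠ k := fun h => (hadj j).ne (h ▸ hwj)
    have := hinj _ (by omega) _ (by omega) (hM.eq_of_mem h2 h1)
    rw [← this, Nat.even_add_one] at hmeven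
    exact hmeven hj'
  · have h2 : s(w k, w (2 * i)) ∈ M := by
      rw [← hwj, Sym2.eq_swap]; exact (hmem _).2 (even_two_mul i)
    have := hinj _ (by omega) _ (by omega) (hM.eq_of_mem h2 h1)
    omega

theorem exists_isAltCycle_of_first_repeat :
    ∃ (n : ℕ) (c : ZMod n → V), n ≠ 0 ∧ IsAltCycle G M c := by
  have : NeZero (k - j) := ⟨by omega⟩
  rcases Nat.even_or_odd j with hj' | hj'
  · -- The cycle is read from `j + 1`, so that it starts with an edge outside `M`.
    have hjk : j + 1 ≠ k := fun h => (hadj j).ne (h ▸ hwj)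
    refine ⟨k - j, _, by omega, isAltCycle_of_periodic hadj hmem (a := j + 1)
      (by simpa [Nat.odd_add_one] using hj') ?_ fun x hx y hy h => ?_⟩
    · rw [show j + 1 + (k - j) = k + 1 by omega]
      exact hM.eq_of_mem ((hmem k).2 (even_of_first_repeat hM hadj hmem hj hwj hinj))
        (hwj ▸ (hmem j).2 hj')
    · have hlast : ∀ x < k, j < x → w x ≠ w k := fun x hx hjx h =>
        absurd (hinj x hx j hj (h.trans hwj.symm)) (by omega)
      rcases (show j + 1 + x < k ∨ j + 1 + x = k by omega) with hx' | hx' <;>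
        rcases (show j + 1 + y < k ∨ j + 1 + y = k by omega) with hy' | hy'
      · have := hinj _ hx' _ hy' h; omega
      · exact absurd (hy' ▸ h) (hlast _ hx' (by omega))
      · exact absurd (hx' ▸ h.symm) (hlast _ hy' (by omega))
      · omega
  · refine ⟨k - j, _, by omega, isAltCycle_of_periodic hadj hmem hj'
      (by rw [Nat.add_sub_cancel' hj.le]; exact hwj.symm) fun x hx y hy h => ?_⟩
    have := hinj _ (by omega) _ (by omega) h
    omega

end Repeat

theorem exists_isAltCycle_of_walk [Finite V] (hM : IsPerfectMatchingOf G M) {w : ℕ → V}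
    (hadj : ∀ k, G.Adj (w k) (w (k + 1))) (hmem : ∀ k, s(w k, w (k + 1)) ∈ M ↔ Even k) :
    ∃ (n : ℕ) (c : ZMod n → V), n ≠ 0 ∧ IsAltCycle G M c := by
  classical
  have hex : ∃ k, ∃ j < k, w j = w k := by
    obtain ⟨a, b, hab, h⟩ := Finite.exists_ne_map_eq_of_infinite w
    rcases hab.lt_or_gt with hab | hab
    exacts [⟨b, a, hab, h⟩, ⟨a, b, hab, h.symm⟩]
  obtain ⟨j, hj, hwj⟩ := Nat.find_spec hex
  refine exists_isAltCycle_of_first_repeat hM hadj hmem hj hwj fun x hx y hy h => ?_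
  by_contra hxy
  rcases Ne.lt_or_gt hxy with hxy | hxy
  exacts [Nat.find_min hex hy ⟨x, hxy, h⟩, Nat.find_min hex hx ⟨y, hxy, h.symm⟩]

theorem IsPerfectMatchingOf.exists_isBlossom [Finite V] [Nonempty V]
    (hM : IsPerfectMatchingOf G M) (huniq : ∀ N, IsPerfectMatchingOf G N → N = M)
    (hno : ∀ e ∈ M, ¬ G.IsBridge e) : ∃ S s, IsBlossom G M S s := by
  have hpartner (v : V) : ∃ u, s(v, u) ∈ M := by
    obtain ⟨e, ⟨he, hve⟩, -⟩ := hM.2 v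
    obtain ⟨u, rfl⟩ := Sym2.mem_iff_exists.1 hve
    exact ⟨u, he⟩
  choose p hp using hpartner
  choose q hq using hM.exists_adj_notMem hno
  set w := altWalk p q (Classical.arbitrary V)
  have hmem (k : ℕ) : s(w k, w (k + 1)) ∈ M ↔ Even k := by
    by_cases hk : Even k <;> simp [w, altWalk, hk, hp, (hq _).2]
  have hadj (k : ℕ) : G.Adj (w k) (w (k + 1)) := by
    by_cases hk : Even k
    · exact hM.1 ((hmem k).2 hk)
    · simpa [w, altWalk, hk] using (hq _).1
  obtain ⟨n, c, hn, hc⟩ := exists_isAltCycle_of_walk hM hadj hmem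
  have : NeZero n := ⟨hn⟩
  rcases Nat.even_or_odd n with hn | hn
  · obtain ⟨N, hN, hNM⟩ := hc.exists_isPerfectMatchingOf_ne hM hn
    exact absurd (huniq N hN) hNM
  · exact ⟨_, _, hc.isBlossom hn⟩

end Walk

theorem IsPerfectMatchingOf.exists_isBridge {V : Type*} [Finite V] [Nonempty V]
    {G : SimpleGraph V} {M : Set (Sym2 V)} (hM : IsPerfectMatchingOf G M)
    (huniq : ∀ N, IsPerfectMatchingOf G N → N = M) : ∃ e ∈ M, G.IsBridge e := by
  induction hcard : Nat.card V using Nat.strong_induction_on generalizing V with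
  | _ k ih =>
  by_contra! hno
  obtain ⟨S, s, hB⟩ := hM.exists_isBlossom huniq hno
  obtain ⟨x, hxS, hxs⟩ := hB.exists_ne_base
  have : Nonempty (Contraction S s) := ⟨contract S s s⟩
  obtain ⟨e, he, hbr⟩ := ih _ (hcard ▸ Finite.card_subtype_lt fun hx => hxs (hx hxS))
    (hB.isPerfectMatchingOf_contract hM) (hB.eq_of_isPerfectMatchingOf_contract hM huniq) rfl
  induction e using Sym2.ind with
  | h a b => exact hno _ he (hB.isBridge_of_contract hM huniq he hbr)

/-- Kotzig's theorem: if a finite nonempty graph `G` admits a unique perfect matching `M`,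
then `M` contains a bridge of `G`. -/
theorem stmt3 {V : Type*} [Fintype V] [Nonempty V] (G : SimpleGraph V)
    (M : Set (Sym2 V)) (hM : IsPerfectMatchingOf G M)
    (huniq : ∀ M', IsPerfectMatchingOf G M' → M' = M) :
    ∃ e ∈ M, G.IsBridge e :=
  hM.exists_isBridge huniq
end

section
/- (Soundness of the join construction.) Let G and G' be finite graphs on disjoint vertex sets with unique perfect matchings M and M' respectively, let U ⊆ V(G) and U' ⊆ V(G'), and let x, x' be two fresh vertices. Let G'' be the graph with vertex set V(G) ∪ V(G') ∪ {x, x'} and edge set E(G) ∪ E(G') ∪ {(x,x')} ∪ { (u,x) : u ∈ U } ∪ { (u',x') : u' ∈ U' }. Then M ∪ M' ∪ {(x,x')} is the unique perfect matching of G''. -/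
/-!
The join `M ∪ M' ∪ {s(x, x')}` is plainly a perfect matching. Conversely, let `N` be a perfect
matching of the joined graph. If `N` matches `x` to some `u ∈ U`, then the remaining edges of `N`
inside `s` form a perfect matching of `s \ {u}`, which is impossible because `s`, having the
perfect matching `M`, has even cardinality. So `N` matches `x` to `x'`; then `N` restricts to
perfect matchings of the two halves, which are `M` and `M'` by uniqueness.
-/

/-- `E` is the edge set of a graph on the vertex set `s`: its edges are non-loops whose
endpoints all lie in `s`. -/
def IsGraphOn {V : Type*} (s : Set V) (E : Set (Sym2 V)) : Prop :=
  ∀ e ∈ E, ¬ e.IsDiag ∧ ∀ v ∈ e, v ∈ s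

/-- `M` is a perfect matching of the graph with vertex set `s` and edge set `E`:
`M ⊆ E` and every vertex of `s` belongs to exactly one edge of `M`. -/
def IsPMOn {V : Type*} (s : Set V) (E M : Set (Sym2 V)) : Prop :=
  M ⊆ E ∧ ∀ v ∈ s, ∃! e, e ∈ M ∧ v ∈ e

section PerfectMatching

variable {V : Type*} {s s' t : Set V} {E E' F M M' N : Set (Sym2 V)}

lemma IsGraphOn.mono (hE : IsGraphOn t E) (hME : M ⊆ E) : IsGraphOn t M :=
  fun e he => hE e (hME he)

lemma IsGraphOn.union (hE : IsGraphOn s E) (hE' : IsGraphOn s' E') :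
    IsGraphOn (s ∪ s') (E ∪ E') := by
  rintro e (he | he)
  · exact ⟨(hE e he).1, fun v hv => .inl ((hE e he).2 v hv)⟩
  · exact ⟨(hE' e he).1, fun v hv => .inr ((hE' e he).2 v hv)⟩

lemma isGraphOn_pair {x x' : V} (hxx' : x ≠ x') : IsGraphOn {x, x'} {s(x, x')} := by
  rintro e rfl
  refine ⟨by simpa using hxx', fun v hv => ?_⟩
  simpa using Sym2.mem_iff.1 hv

lemma isPMOn_pair (x x' : V) : IsPMOn {x, x'} {s(x, x')} {s(x, x')} := by
  refine ⟨subset_rfl, fun v hv => ⟨s(x, x'), ⟨rfl, ?_⟩, fun e he => he.1⟩⟩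
  rcases hv with rfl | rfl <;> simp

lemma IsPMOn.mono (hM : IsPMOn t E M) (hEF : E ⊆ F) : IsPMOn t F M :=
  ⟨hM.1.trans hEF, hM.2⟩

lemma IsPMOn.eq_of_mem (hM : IsPMOn t E M) {v : V} (hv : v ∈ t) {e f : Sym2 V}
    (he : e ∈ M) (hf : f ∈ M) (hve : v ∈ e) (hvf : v ∈ f) : e = f :=
  (hM.2 v hv).unique ⟨he, hve⟩ ⟨hf, hvf⟩

lemma IsPMOn.existsUnique_union_left (hM : IsPMOn s E M) (hE' : IsGraphOn s' E')
    (hM'E' : M' ⊆ E') (hdisj : Disjoint s s') {v : V} (hv : v ∈ s) :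
    ∃! e, e ∈ M ∪ M' ∧ v ∈ e := by
  obtain ⟨e, ⟨he, hve⟩, huniq⟩ := hM.2 v hv
  refine ⟨e, ⟨.inl he, hve⟩, ?_⟩
  rintro f ⟨hf | hf, hvf⟩
  · exact huniq f ⟨hf, hvf⟩
  · exact absurd ((hE' f (hM'E' hf)).2 v hvf) (Set.disjoint_left.1 hdisj hv)

lemma IsPMOn.union (hM : IsPMOn s E M) (hM' : IsPMOn s' E' M') (hE : IsGraphOn s E)
    (hE' : IsGraphOn s' E') (hdisj : Disjoint s s') : IsPMOn (s ∪ s') (E ∪ E') (M ∪ M') := by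
  refine ⟨Set.union_subset_union hM.1 hM'.1, ?_⟩
  rintro v (hv | hv)
  · exact hM.existsUnique_union_left hE' hM'.1 hdisj hv
  · rw [Set.union_comm]
    exact hM'.existsUnique_union_left hE hM.1 hdisj.symm hv

lemma IsPMOn.inter (hN : IsPMOn t F N) (hst : s ⊆ t) (hNE : ∀ e ∈ N, ∀ v ∈ s, v ∈ e → e ∈ E) :
    IsPMOn s E (N ∩ E) := by
  refine ⟨Set.inter_subset_right, fun v hv => ?_⟩
  obtain ⟨e, ⟨he, hve⟩, huniq⟩ := hN.2 v (hst hv)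
  exact ⟨e, ⟨⟨he, hNE e he v hv hve⟩, hve⟩, fun f hf => huniq f ⟨hf.1.1, hf.2⟩⟩

def IsGraphOn.toSubgraph (hM : IsGraphOn t M) : (⊤ : SimpleGraph V).Subgraph where
  verts := t
  Adj v w := s(v, w) ∈ M
  adj_sub h := by simpa using (hM _ h).1
  edge_vert h := (hM _ h).2 _ (Sym2.mem_mk_left _ _)
  symm := ⟨fun _ _ h => by rwa [Sym2.eq_swap]⟩

lemma IsPMOn.isMatching_toSubgraph (hM : IsPMOn t E M) (hMt : IsGraphOn t M) :
    hMt.toSubgraph.IsMatching := by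
  intro v (hv : v ∈ t)
  obtain ⟨e, ⟨he, hve⟩, -⟩ := hM.2 v hv
  refine ⟨Sym2.Mem.other hve, show s(v, _) ∈ M from (Sym2.other_spec hve).symm ▸ he,
    fun w (hw : s(v, w) ∈ M) => ?_⟩
  have := hM.eq_of_mem hv hw he (Sym2.mem_mk_left _ _) hve
  exact Sym2.congr_right.1 (this.trans (Sym2.other_spec hve).symm)

lemma IsPMOn.even_ncard (hM : IsPMOn t E M) (hMt : IsGraphOn t M) (ht : t.Finite) :
    Even t.ncard := by
  have : Fintype t := ht.fintype
  rw [Set.ncard_eq_toFinset_card']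
  exact @SimpleGraph.Subgraph.IsMatching.even_card _ _ _ this (hM.isMatching_toSubgraph hMt)

end PerfectMatching

section Join

variable {V : Type*} {s s' U U' : Set V} {E E' M N : Set (Sym2 V)} {x x' : V}

def joinEdges (E E' : Set (Sym2 V)) (U U' : Set V) (x x' : V) : Set (Sym2 V) :=
  E ∪ E' ∪ {s(x, x')} ∪ {e | ∃ u ∈ U, e = s(u, x)} ∪ {e | ∃ u ∈ U', e = s(u, x')}

lemma joinEdges_comm : joinEdges E E' U U' x x' = joinEdges E' E U' U x' x := by
  ext e
  simp only [joinEdges, Set.mem_union, Set.mem_singleton_iff, Set.mem_ofPred_eq]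
  rw [Sym2.eq_swap (a := x') (b := x)]
  grind

lemma joinEdges_mem_left_or_incident (hE' : IsGraphOn s' E') (hdisj : Disjoint s s')
    (hU' : U' ⊆ s') (hx' : x' ∉ s) {e : Sym2 V} (he : e ∈ joinEdges E E' U U' x x') {v : V}
    (hv : v ∈ s) (hve : v ∈ e) : e ∈ E ∨ x ∈ e := by
  rcases he with (((he | he) | rfl) | ⟨u, -, rfl⟩) | ⟨u, hu, rfl⟩
  · exact .inl he
  · exact absurd ((hE' e he).2 v hve) (Set.disjoint_left.1 hdisj hv)
  · exact .inr (Sym2.mem_mk_left _ _)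
  · exact .inr (Sym2.mem_mk_right _ _)
  · rcases Sym2.mem_iff.1 hve with rfl | rfl
    · exact absurd (hU' hu) (Set.disjoint_left.1 hdisj hv)
    · exact absurd hv hx'

lemma joinEdges_incident_fresh (hE : IsGraphOn s E) (hE' : IsGraphOn s' E') (hU' : U' ⊆ s')
    (hxs : x ∉ s) (hxs' : x ∉ s') (hxx' : x ≠ x') {e : Sym2 V}
    (he : e ∈ joinEdges E E' U U' x x') (hxe : x ∈ e) :
    e = s(x, x') ∨ ∃ u ∈ U, e = s(u, x) := by
  rcases he with (((he | he) | he) | he) | ⟨u, hu, rfl⟩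
  · exact absurd ((hE e he).2 x hxe) hxs
  · exact absurd ((hE' e he).2 x hxe) hxs'
  · exact .inl he
  · exact .inr he
  · rcases Sym2.mem_iff.1 hxe with rfl | rfl
    · exact absurd (hU' hu) hxs'
    · exact absurd rfl hxx'

lemma mk_notMem_of_isPMOn_joinEdges (hs : s.Finite) (hE : IsGraphOn s E)
    (hE' : IsGraphOn s' E') (hdisj : Disjoint s s') (hU' : U' ⊆ s') (hxs : x ∉ s) (hx's : x' ∉ s)
    (hM : IsPMOn s E M) (hN : IsPMOn (s ∪ s' ∪ {x, x'}) (joinEdges E E' U U' x x') N)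
    {u : V} (hu : u ∈ s) : s(u, x) ∉ N := by
  intro huxN
  have hx : x ∈ s ∪ s' ∪ {x, x'} := .inr (.inl rfl)
  have hNE : IsPMOn (s \ {u}) E (N ∩ E) := by
    refine hN.inter (Set.sdiff_subset.trans (Set.subset_union_left.trans Set.subset_union_left))
      fun e he v hv hve => ?_
    refine (joinEdges_mem_left_or_incident hE' hdisj hU' hx's (hN.1 he) hv.1 hve).resolve_right
      fun hxe => ?_
    obtain rfl := hN.eq_of_mem hx he huxN hxe (Sym2.mem_mk_right _ _)
    rcases Sym2.mem_iff.1 hve with rfl | rfl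
    · exact hv.2 rfl
    · exact hxs hv.1
  have hNEs : IsGraphOn (s \ {u}) (N ∩ E) := by
    rintro e ⟨heN, heE⟩
    refine ⟨(hE e heE).1, fun v hve => ⟨(hE e heE).2 v hve, ?_⟩⟩
    rintro rfl
    obtain rfl := hN.eq_of_mem (.inl (.inl hu)) heN huxN hve (Sym2.mem_mk_left _ _)
    exact hxs ((hE _ heE).2 x (Sym2.mem_mk_right _ _))
  obtain ⟨k, hk⟩ := hNE.even_ncard hNEs hs.sdiff
  obtain ⟨j, hj⟩ := hM.even_ncard (hE.mono hM.1) hs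
  have hpos : 0 < s.ncard := (Set.ncard_pos hs).2 ⟨u, hu⟩
  rw [Set.ncard_sdiff_singleton_of_mem hu] at hk
  omega

lemma inter_eq_of_isPMOn_joinEdges (hE' : IsGraphOn s' E') (hdisj : Disjoint s s')
    (hU' : U' ⊆ s') (hxs : x ∉ s) (hx's : x' ∉ s) (hMuniq : ∀ N, IsPMOn s E N → N = M)
    (hN : IsPMOn (s ∪ s' ∪ {x, x'}) (joinEdges E E' U U' x x') N) (hxx'N : s(x, x') ∈ N) :
    N ∩ E = M := by
  refine hMuniq _ (hN.inter (Set.subset_union_left.trans Set.subset_union_left)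
    fun e he v hv hve => ?_)
  refine (joinEdges_mem_left_or_incident hE' hdisj hU' hx's (hN.1 he) hv hve).resolve_right
    fun hxe => ?_
  obtain rfl := hN.eq_of_mem (.inr (.inl rfl)) he hxx'N hxe (Sym2.mem_mk_left _ _)
  rcases Sym2.mem_iff.1 hve with rfl | rfl
  · exact hxs hv
  · exact hx's hv

lemma eq_union_of_isPMOn_joinEdges (hN : IsPMOn (s ∪ s' ∪ {x, x'}) (joinEdges E E' U U' x x') N)
    (hxx'N : s(x, x') ∈ N) : N = N ∩ E ∪ N ∩ E' ∪ {s(x, x')} := by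
  have hx : x ∈ s ∪ s' ∪ {x, x'} := .inr (.inl rfl)
  have hx' : x' ∈ s ∪ s' ∪ {x, x'} := .inr (.inr rfl)
  ext e
  constructor
  · intro he
    rcases hN.1 he with (((heE | heE') | hxx') | ⟨u, -, rfl⟩) | ⟨u, -, rfl⟩
    · exact .inl (.inl ⟨he, heE⟩)
    · exact .inl (.inr ⟨he, heE'⟩)
    · exact .inr hxx'
    · exact .inr (hN.eq_of_mem hx he hxx'N (Sym2.mem_mk_right _ _) (Sym2.mem_mk_left _ _))
    · exact .inr (hN.eq_of_mem hx' he hxx'N (Sym2.mem_mk_right _ _) (Sym2.mem_mk_right _ _))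
  · rintro ((he | he) | rfl)
    exacts [he.1, he.1, hxx'N]

end Join

/-- Soundness of the join construction: given two finite graphs `(s, E)` and `(s', E')`
on disjoint vertex sets with unique perfect matchings `M` and `M'`, subsets `U ⊆ s` and
`U' ⊆ s'`, and two fresh vertices `x ≠ x'`, the graph with vertex set `s ∪ s' ∪ {x, x'}`
and edge set `E ∪ E' ∪ {s(x,x')} ∪ (U × {x}) ∪ (U' × {x'})` has
`M ∪ M' ∪ {s(x,x')}` as its unique perfect matching. -/
theorem stmt5 {V : Type*} [Fintype V] (s s' U U' : Set V) (E E' M M' : Set (Sym2 V))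
    (x x' : V)
    (hE : IsGraphOn s E) (hE' : IsGraphOn s' E')
    (hdisj : Disjoint s s') (hU : U ⊆ s) (hU' : U' ⊆ s')
    (hx : x ∉ s ∪ s') (hx' : x' ∉ s ∪ s') (hxx' : x ≠ x')
    (hM : IsPMOn s E M) (hMuniq : ∀ N, IsPMOn s E N → N = M)
    (hM' : IsPMOn s' E' M') (hM'uniq : ∀ N, IsPMOn s' E' N → N = M') :
    IsPMOn (s ∪ s' ∪ {x, x'})
        (E ∪ E' ∪ {s(x, x')} ∪ {e | ∃ u ∈ U, e = s(u, x)} ∪ {e | ∃ u ∈ U', e = s(u, x')})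
        (M ∪ M' ∪ {s(x, x')}) ∧
      ∀ N, IsPMOn (s ∪ s' ∪ {x, x'})
          (E ∪ E' ∪ {s(x, x')} ∪ {e | ∃ u ∈ U, e = s(u, x)} ∪ {e | ∃ u ∈ U', e = s(u, x')})
          N → N = M ∪ M' ∪ {s(x, x')} := by
  have hfresh : Disjoint (s ∪ s') {x, x'} := by
    simp [Set.disjoint_insert_right, hx, hx']
  rw [Set.mem_union, not_or] at hx hx'
  refine ⟨((hM.union hM' hE hE' hdisj).union (isPMOn_pair x x') (hE.union hE')
    (isGraphOn_pair hxx') hfresh).mono (Set.subset_union_left.trans Set.subset_union_left),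
    fun N (hN : IsPMOn _ (joinEdges E E' U U' x x') N) => ?_⟩
  have hN' : IsPMOn (s' ∪ s ∪ {x', x}) (joinEdges E' E U' U x' x) N := by
    rwa [Set.union_comm s', Set.pair_comm, ← joinEdges_comm]
  obtain ⟨e, ⟨heN, hxe⟩, -⟩ := hN.2 x (.inr (.inl rfl))
  rcases joinEdges_incident_fresh hE hE' hU' hx.1 hx.2 hxx' (hN.1 heN) hxe with rfl | ⟨u, hu, rfl⟩
  · rw [eq_union_of_isPMOn_joinEdges hN heN,
      inter_eq_of_isPMOn_joinEdges hE' hdisj hU' hx.1 hx'.1 hMuniq hN heN,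
      inter_eq_of_isPMOn_joinEdges hE hdisj.symm hU hx'.2 hx.2 hM'uniq hN' (Sym2.eq_swap ▸ heN)]
  · exact absurd heN (mk_notMem_of_isPMOn_joinEdges s.toFinite hE hE' hdisj hU' hx.1 hx'.1 hM hN
      (hU hu))
end

section
/- Let G be a finite graph and M a matching of G such that there is no alternating cycle for M and exactly two vertices u and v are unmatched by M, and let e = (a, b) ∈ M. Then the graph G − e (G with the single edge e deleted) admits a perfect matching if and only if there exists an alternating path for M in G with endpoints u and v that crosses the edge e. -/
/-- A set of edges `M` is a matching of the simple graph `G` if every edge of `M` is an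
edge of `G` and no two edges of `M` share a vertex. -/
def IsMatchingOf {V : Type*} (G : SimpleGraph V) (M : Set (Sym2 V)) : Prop :=
  M ⊆ G.edgeSet ∧ ∀ v : V, ∀ e ∈ M, ∀ f ∈ M, v ∈ e → v ∈ f → e = f

/-- A closed walk is alternating for `M` if, of every two cyclically consecutive edges,
exactly one belongs to `M`. -/
def CycleAlt {V : Type*} {G : SimpleGraph V} (M : Set (Sym2 V)) {v : V}
    (c : G.Walk v v) : Prop :=
  ∀ i : Fin c.edges.length,
    (c.edges.get i ∈ M ↔
      c.edges.get ⟨(↑i + 1) % c.edges.length, Nat.mod_lt _ i.pos⟩ ∉ M)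

/-!
If `N` is a perfect matching of `G − e`, then in `M ∆ N` distinct edges at a common vertex
alternate between `M` and `N`, so a cycle of `M ∆ N` would be an alternating cycle for `M`:
`M ∆ N` is a forest. The ends of a longest path of `M ∆ N` through `e` have only one neighbour
there, hence are not covered by both `M` and `N`; since `N` is perfect they are unmatched by `M`,
i.e. they are `u` and `v`. Conversely, if `P` is an alternating `u`–`v` path through `e`, then
`M ∆ P` is a perfect matching of `G`, and it avoids `e ∈ M ∩ P`.
-/

open SimpleGraph Walk
open scoped symmDiff

section Matchings

variable {V : Type*} {G G' : SimpleGraph V} {M N : Set (Sym2 V)}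

lemma IsPerfectMatchingOf.isMatchingOf (hN : IsPerfectMatchingOf G N) : IsMatchingOf G N :=
  ⟨hN.1, fun w _ he _ hf hwe hwf => (hN.2 w).unique ⟨he, hwe⟩ ⟨hf, hwf⟩⟩

lemma isPerfectMatchingOf_deleteEdges_iff {s : Set (Sym2 V)} :
    IsPerfectMatchingOf (G.deleteEdges s) N ↔ IsPerfectMatchingOf G N ∧ Disjoint N s := by
  simp only [IsPerfectMatchingOf, edgeSet_deleteEdges, Set.subset_sdiff]
  tauto

lemma IsMatchingOf.mem_iff_notMem_of_mem_symmDiff (hM : IsMatchingOf G M)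
    (hN : IsMatchingOf G' N) {f g : Sym2 V} (hf : f ∈ M ∆ N) (hg : g ∈ M ∆ N) (hfg : f ≠ g)
    {w : V} (hwf : w ∈ f) (hwg : w ∈ g) : f ∈ M ↔ g ∉ M := by
  rw [Set.mem_symmDiff] at hf hg
  constructor
  · exact fun hfM hgM => hfg (hM.2 w f hfM g hgM hwf hwg)
  · intro hgM
    by_contra hfM
    exact hfg (hN.2 w f (by tauto) g (by tauto) hwf hwg)

lemma IsMatchingOf.exists_ne_mem_symmDiff (hM : IsMatchingOf G M) (hN : IsMatchingOf G' N)
    {w : V} (hwM : ∃ m ∈ M, w ∈ m) (hwN : ∃ n ∈ N, w ∈ n) {f : Sym2 V} (hf : f ∈ M ∆ N)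
    (hwf : w ∈ f) : ∃ g ∈ M ∆ N, w ∈ g ∧ g ≠ f := by
  obtain ⟨m, hm, hwm⟩ := hwM
  obtain ⟨n, hn, hwn⟩ := hwN
  rcases Set.mem_symmDiff.mp hf with ⟨hfM, hfN⟩ | ⟨hfN, hfM⟩
  · refine ⟨n, Set.mem_symmDiff.mpr (Or.inr ⟨hn, fun hnM => hfN ?_⟩), hwn, ?_⟩
    · rwa [hM.2 w f hfM n hnM hwf hwn]
    · rintro rfl
      exact hfN hn
  · refine ⟨m, Set.mem_symmDiff.mpr (Or.inl ⟨hm, fun hmN => hfM ?_⟩), hwm, ?_⟩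
    · rwa [hN.2 w f hfN m hmN hwf hwm]
    · rintro rfl
      exact hfM hm

lemma existsUnique_mem_symmDiff {P : Set (Sym2 V)} {w : V} (hMP : ∀ m ∈ M, w ∈ m → m ∈ P)
    (hP : ∃! f, (f ∈ P ∧ f ∉ M) ∧ w ∈ f) : ∃! f, f ∈ M ∆ P ∧ w ∈ f := by
  refine (existsUnique_congr fun f => ?_).mp hP
  have := hMP f
  rw [Set.mem_symmDiff]
  tauto

end Matchings

namespace SimpleGraph.Walk

variable {V : Type*} {G : SimpleGraph V} {u v w : V}

lemma IsPath.eq_mk_snd_of_mem_edges {p : G.Walk u v} (hp : p.IsPath) {f : Sym2 V}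
    (hf : f ∈ p.edges) (huf : u ∈ f) : f = s(u, p.snd) := by
  cases p with
  | nil => simp at hf
  | cons h q =>
    rw [edges_cons, List.mem_cons] at hf
    rcases hf with rfl | hf
    · simp
    · exact absurd (mem_support_of_mem_edges hf huf) ((cons_isPath_iff h q).mp hp).2

lemma IsPath.existsUnique_mem_edges_start {p : G.Walk u v} (hp : p.IsPath) (huv : u ≠ v) :
    ∃! f, f ∈ p.edges ∧ u ∈ f := by
  refine ⟨s(u, p.snd), ⟨?_, Sym2.mem_mk_left _ _⟩, fun f ⟨hf, huf⟩ =>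
    hp.eq_mk_snd_of_mem_edges hf huf⟩
  obtain ⟨_, h, q, rfl⟩ := exists_eq_cons_of_ne huv p
  simp

lemma IsPath.exists_infix_edges_of_mem_support {p : G.Walk u v} (hp : p.IsPath)
    (hw : w ∈ p.support) (hwu : w ≠ u) (hwv : w ≠ v) :
    ∃ f g, [f, g] <:+: p.edges ∧ w ∈ f ∧ w ∈ g ∧ ∀ e ∈ p.edges, w ∈ e → e = f ∨ e = g := by
  obtain ⟨q, r, hq, hr, rfl⟩ := hp.mem_support_iff_exists_append.mp hw
  have hqn : ¬ q.Nil := not_nil_of_ne hwu.symm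
  have hrn : ¬ r.Nil := not_nil_of_ne hwv
  have hqe : q.edges = q.dropLast.edges ++ [s(q.penultimate, w)] := by
    conv_lhs => rw [← q.concat_dropLast (q.adj_penultimate hqn)]
    rw [edges_concat, List.concat_eq_append]
  have hre : r.edges = s(w, r.snd) :: r.tail.edges := by
    conv_lhs => rw [← r.cons_tail_eq hrn]
    rw [edges_cons]
  refine ⟨s(q.penultimate, w), s(w, r.snd), ⟨q.dropLast.edges, r.tail.edges, ?_⟩,
    Sym2.mem_mk_right _ _, Sym2.mem_mk_left _ _, fun e he hwe => ?_⟩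
  · rw [edges_append, hqe, hre]
    simp
  rcases List.mem_append.mp ((edges_append q r) ▸ he) with he | he
  · left
    have := hq.reverse.eq_mk_snd_of_mem_edges (by simpa using he) hwe
    rwa [snd_reverse, Sym2.eq_swap] at this
  · exact Or.inr (hr.eq_mk_snd_of_mem_edges he hwe)

lemma IsTrail.isChain_edges {R : Sym2 V → Sym2 V → Prop} {p : G.Walk u v} (hp : p.IsTrail)
    (hR : ∀ f ∈ p.edges, ∀ g ∈ p.edges, f ≠ g → ∀ w ∈ f, w ∈ g → R f g) :
    p.edges.IsChain R := by
  refine List.isChain_iff_getElem.mpr fun i hi => hR _ (List.getElem_mem _) _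
    (List.getElem_mem _) ?_ (p.getVert (i + 1)) ?_ ?_
  · rw [Ne, hp.edges_nodup.getElem_inj_iff]
    omega
  · simp [getElem_edges]
  · simp [getElem_edges]

lemma IsCycle.cycleAlt {M : Set (Sym2 V)} {c : G.Walk u u} (hc : c.IsCycle)
    (halt : ∀ f ∈ c.edges, ∀ g ∈ c.edges, f ≠ g → ∀ w ∈ f, w ∈ g → (f ∈ M ↔ g ∉ M)) :
    CycleAlt M c := by
  rintro ⟨i, hi⟩
  have h3 := hc.three_le_length
  rw [length_edges] at hi
  have hnext : (i + 1) % c.length ≠ i ∧ c.getVert ((i + 1) % c.length) = c.getVert (i + 1) := by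
    rcases Nat.lt_or_ge (i + 1) c.length with hlt | hge
    · rw [Nat.mod_eq_of_lt hlt]
      exact ⟨by omega, rfl⟩
    · rw [show i + 1 = c.length by omega, Nat.mod_self, getVert_zero, getVert_length]
      exact ⟨by omega, rfl⟩
  refine halt _ (List.get_mem _ _) _ (List.get_mem _ _) ?_ (c.getVert (i + 1)) ?_ ?_
  · rw [List.get_eq_getElem, List.get_eq_getElem, Ne, hc.edges_nodup.getElem_inj_iff]
    simpa using hnext.1.symm
  · simp [getElem_edges]
  · simp [getElem_edges, hnext.2]

lemma mem_of_mem_edges_fromEdgeSet {E : Set (Sym2 V)}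
    {q : (fromEdgeSet E).Walk u v} {f : Sym2 V} (hf : f ∈ q.edges) : f ∈ E :=
  (edgeSet_fromEdgeSet E ▸ q.edges_subset_edgeSet hf).1

end SimpleGraph.Walk

section Forward

variable {V : Type*} {G G' : SimpleGraph V} {M N : Set (Sym2 V)}

lemma isAcyclic_fromEdgeSet_of_alternating {E : Set (Sym2 V)} (hE : E ⊆ G.edgeSet)
    (halt : ∀ f ∈ E, ∀ g ∈ E, f ≠ g → ∀ w ∈ f, w ∈ g → (f ∈ M ↔ g ∉ M))
    (hnocycle : ¬ ∃ (w : V) (c : G.Walk w w), c.IsCycle ∧ CycleAlt M c) :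
    (fromEdgeSet E).IsAcyclic := by
  intro w c hc
  have hcG : ∀ f ∈ c.edges, f ∈ G.edgeSet := fun f hf => hE (mem_of_mem_edges_fromEdgeSet hf)
  refine hnocycle ⟨w, c.transfer G hcG, hc.transfer hcG, (hc.transfer hcG).cycleAlt ?_⟩
  rw [edges_transfer]
  exact fun f hf g hg =>
    halt f (mem_of_mem_edges_fromEdgeSet hf) g (mem_of_mem_edges_fromEdgeSet hg)

lemma SimpleGraph.Walk.IsPath.exists_isPath_isChain_of_fromEdgeSet {E : Set (Sym2 V)} {u v : V}
    (hE : E ⊆ G.edgeSet) (halt : ∀ f ∈ E, ∀ g ∈ E, f ≠ g → ∀ w ∈ f, w ∈ g → (f ∈ M ↔ g ∉ M))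
    {q : (fromEdgeSet E).Walk u v} (hq : q.IsPath) :
    ∃ p : G.Walk u v, p.IsPath ∧ p.edges.IsChain (fun e₁ e₂ => (e₁ ∈ M ↔ e₂ ∉ M)) ∧
      p.edges = q.edges := by
  have hqG : ∀ f ∈ q.edges, f ∈ G.edgeSet := fun f hf => hE (mem_of_mem_edges_fromEdgeSet hf)
  refine ⟨q.transfer G hqG, hq.transfer hqG, (hq.transfer hqG).isTrail.isChain_edges ?_,
    edges_transfer q hqG⟩
  rw [edges_transfer]
  exact fun f hf g hg =>
    halt f (mem_of_mem_edges_fromEdgeSet hf) g (mem_of_mem_edges_fromEdgeSet hg)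

lemma exists_isPath_forall_adj_mem_support [Fintype V] {H : SimpleGraph V} {x y : V}
    (hxy : H.Adj x y) :
    ∃ (s t : V) (p : H.Walk s t), p.IsPath ∧ s(x, y) ∈ p.edges ∧
      (∀ z, H.Adj s z → z ∈ p.support) ∧ (∀ z, H.Adj t z → z ∈ p.support) := by
  let S : Set ℕ := {n | ∃ (s t : V) (p : H.Walk s t), p.IsPath ∧ s(x, y) ∈ p.edges ∧ p.length = n}
  have hbdd : BddAbove S :=
    ⟨Fintype.card V, by rintro _ ⟨_, _, p, hp, -, rfl⟩; exact hp.length_lt.le⟩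
  have hne : S.Nonempty := ⟨1, x, y, cons hxy nil, by simp [hxy.ne], by simp, rfl⟩
  obtain ⟨s, t, p, hp, hxyp, hlen⟩ := Nat.sSup_mem hne hbdd
  have hmax : ∀ (s' t' : V) (q : H.Walk s' t'), q.IsPath → s(x, y) ∈ q.edges →
      q.length ≤ p.length :=
    fun s' t' q hq hxyq => hlen ▸ le_csSup hbdd ⟨s', t', q, hq, hxyq, rfl⟩
  refine ⟨s, t, p, hp, hxyp, fun z hz => ?_, fun z hz => ?_⟩
  · by_contra hzp
    have := hmax _ _ (cons hz.symm p) (hp.cons hzp) (by simp [hxyp])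
    simp at this
  · by_contra hzp
    have := hmax _ _ (p.concat hz) (hp.concat hzp hz) (by simp [hxyp])
    simp at this

/-- In the acyclic graph `M ∆ N`, the start of a path that cannot be extended has a single
neighbour, whereas a vertex covered by both `M` and `N` meets two edges of `M ∆ N`. -/
lemma IsMatchingOf.forall_notMem_of_isPath_of_forall_adj_mem_support (hM : IsMatchingOf G M)
    (hN : IsMatchingOf G' N) (hacyc : (fromEdgeSet (M ∆ N)).IsAcyclic) {s t : V}
    {p : (fromEdgeSet (M ∆ N)).Walk s t} (hp : p.IsPath) (hpn : ¬ p.Nil)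
    (hsupp : ∀ z, (fromEdgeSet (M ∆ N)).Adj s z → z ∈ p.support) (hsN : ∃ n ∈ N, s ∈ n) :
    ∀ m ∈ M, s ∉ m := by
  intro m hm hsm
  have hfirst := (fromEdgeSet_adj _).mp (p.adj_snd hpn)
  obtain ⟨g, hg, hsg, hgf⟩ :=
    hM.exists_ne_mem_symmDiff hN ⟨m, hm, hsm⟩ hsN hfirst.1 (Sym2.mem_mk_left _ _)
  obtain ⟨z, rfl⟩ := Sym2.mem_iff_exists.mp hsg
  have hgdiag : ¬ (s(s, z)).IsDiag := by
    rcases Set.mem_symmDiff.mp hg with ⟨hgM, -⟩ | ⟨hgN, -⟩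
    · exact G.not_isDiag_of_mem_edgeSet (hM.1 hgM)
    · exact G'.not_isDiag_of_mem_edgeSet (hN.1 hgN)
  have hsz : (fromEdgeSet (M ∆ N)).Adj s z := (fromEdgeSet_adj _).mpr ⟨hg, hgdiag⟩
  exact hgf (by rw [hacyc.eq_snd_of_adj_start hp hsz (hsupp z hsz)])

theorem exists_isPath_alternating_of_isPerfectMatchingOf [Fintype V] (hM : IsMatchingOf G M)
    (hnocycle : ¬ ∃ (w : V) (c : G.Walk w w), c.IsCycle ∧ CycleAlt M c) {u v : V}
    (hunmatched : {w : V | ∀ e ∈ M, w ∉ e} = {u, v}) (hN : IsPerfectMatchingOf G N)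
    {a b : V} (hab : s(a, b) ∈ M \ N) :
    ∃ p : G.Walk u v, p.IsPath ∧ p.edges.IsChain (fun e₁ e₂ => (e₁ ∈ M ↔ e₂ ∉ M)) ∧
      s(a, b) ∈ p.edges := by
  set D := fromEdgeSet (M ∆ N)
  have halt : ∀ f ∈ M ∆ N, ∀ g ∈ M ∆ N, f ≠ g → ∀ w ∈ f, w ∈ g → (f ∈ M ↔ g ∉ M) :=
    fun f hf g hg hfg w hwf hwg =>
      hM.mem_iff_notMem_of_mem_symmDiff hN.isMatchingOf hf hg hfg hwf hwg
  have hΔG : M ∆ N ⊆ G.edgeSet := Set.symmDiff_subset_union.trans (Set.union_subset hM.1 hN.1)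
  have hacyc : D.IsAcyclic := isAcyclic_fromEdgeSet_of_alternating hΔG halt hnocycle
  have hDab : D.Adj a b :=
    (fromEdgeSet_adj _).mpr ⟨Or.inl hab, G.not_isDiag_of_mem_edgeSet (hM.1 hab.1)⟩
  obtain ⟨s, t, p, hp, habp, hs, ht⟩ := exists_isPath_forall_adj_mem_support hDab
  have hpn : ¬ p.Nil := fun h => List.not_mem_nil (edges_eq_nil.mpr h ▸ habp)
  have hendpoint : ∀ x, (∀ m ∈ M, x ∉ m) → x = u ∨ x = v := fun x hx =>
    (Set.ext_iff.mp hunmatched x).mp hx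
  have hsuv := hendpoint s <| hM.forall_notMem_of_isPath_of_forall_adj_mem_support
    hN.isMatchingOf hacyc hp hpn hs (hN.2 s).exists
  have htuv := hendpoint t <| hM.forall_notMem_of_isPath_of_forall_adj_mem_support
    hN.isMatchingOf hacyc hp.reverse (by simpa [nil_reverse] using hpn)
    (by simpa only [support_reverse, List.mem_reverse] using ht) (hN.2 t).exists
  have hst : s ≠ t := by
    rintro rfl
    exact hpn (isPath_iff_nil.mp hp)
  have hlift : ∀ q : D.Walk u v, q.IsPath → s(a, b) ∈ q.edges → ∃ p : G.Walk u v, p.IsPath ∧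
      p.edges.IsChain (fun e₁ e₂ => (e₁ ∈ M ↔ e₂ ∉ M)) ∧ s(a, b) ∈ p.edges := fun q hq habq =>
    let ⟨p, hp, hpalt, hpq⟩ := hq.exists_isPath_isChain_of_fromEdgeSet hΔG halt
    ⟨p, hp, hpalt, hpq ▸ habq⟩
  rcases hsuv with rfl | rfl <;> rcases htuv with rfl | rfl
  · exact absurd rfl hst
  · exact hlift p hp habp
  · exact hlift p.reverse hp.reverse (by simpa using habp)
  · exact absurd rfl hst

end Forward

section Backward

variable {V : Type*} {G : SimpleGraph V} {M : Set (Sym2 V)}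

lemma IsMatchingOf.mem_edges_and_existsUnique_of_mem_support (hM : IsMatchingOf G M) {u v w : V}
    (huv : u ≠ v) (hu : ∀ e ∈ M, u ∉ e) (hv : ∀ e ∈ M, v ∉ e) {p : G.Walk u v} (hp : p.IsPath)
    (halt : p.edges.IsChain (fun e₁ e₂ => (e₁ ∈ M ↔ e₂ ∉ M))) (hw : w ∈ p.support) :
    (∀ m ∈ M, w ∈ m → m ∈ p.edges) ∧ ∃! f, (f ∈ p.edges ∧ f ∉ M) ∧ w ∈ f := by
  by_cases hwu : w = u
  · subst hwu
    refine ⟨fun m hm hwm => absurd hwm (hu m hm), ?_⟩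
    refine (existsUnique_congr fun f => ?_).mpr (hp.existsUnique_mem_edges_start huv)
    have := hu f
    tauto
  by_cases hwv : w = v
  · subst hwv
    refine ⟨fun m hm hwm => absurd hwm (hv m hm), ?_⟩
    refine (existsUnique_congr fun f => ?_).mpr (hp.reverse.existsUnique_mem_edges_start huv.symm)
    have := hv f
    rw [edges_reverse, List.mem_reverse]
    tauto
  obtain ⟨f, g, hfg, hwf, hwg, hedges⟩ := hp.exists_infix_edges_of_mem_support hw hwu hwv
  have hfgM : f ∈ M ↔ g ∉ M := by simpa using halt.infix hfg
  have hf : f ∈ p.edges := hfg.subset (by simp)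
  have hg : g ∈ p.edges := hfg.subset (by simp)
  clear hfg
  wlog hfM : f ∈ M generalizing f g
  · exact this g f hwg hwf (fun e he hwe => (hedges e he hwe).symm) (by tauto) hg hf (by tauto)
  have hgM : g ∉ M := hfgM.mp hfM
  refine ⟨fun m hm hwm => hM.2 w m hm f hfM hwm hwf ▸ hf, g, ⟨⟨hg, hgM⟩, hwg⟩, ?_⟩
  rintro e ⟨⟨he, heM⟩, hwe⟩
  exact (hedges e he hwe).resolve_left (by rintro rfl; exact heM hfM)

theorem IsMatchingOf.isPerfectMatchingOf_symmDiff_edges (hM : IsMatchingOf G M) {u v : V}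
    (huv : u ≠ v) (hunmatched : {w : V | ∀ e ∈ M, w ∉ e} = {u, v}) {p : G.Walk u v}
    (hp : p.IsPath) (halt : p.edges.IsChain (fun e₁ e₂ => (e₁ ∈ M ↔ e₂ ∉ M))) :
    IsPerfectMatchingOf G (M ∆ {f | f ∈ p.edges}) := by
  have hunm : ∀ w, (∀ e ∈ M, w ∉ e) ↔ w = u ∨ w = v := fun w => Set.ext_iff.mp hunmatched w
  refine ⟨Set.symmDiff_subset_union.trans
    (Set.union_subset hM.1 fun f hf => p.edges_subset_edgeSet hf), fun w => ?_⟩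
  by_cases hw : w ∈ p.support
  · obtain ⟨hMP, hP⟩ := hM.mem_edges_and_existsUnique_of_mem_support huv
      ((hunm u).mpr (Or.inl rfl)) ((hunm v).mpr (Or.inr rfl)) hp halt hw
    exact existsUnique_mem_symmDiff hMP hP
  · have hwuv : ¬ (w = u ∨ w = v) := by
      rintro (rfl | rfl)
      exacts [hw p.start_mem_support, hw p.end_mem_support]
    obtain ⟨m, hm, hwm⟩ : ∃ m ∈ M, w ∈ m := by
      by_contra! h
      exact hwuv ((hunm w).mp h)
    have hnotP : ∀ f ∈ p.edges, w ∉ f := fun f hf hwf => hw (mem_support_of_mem_edges hf hwf)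
    refine ⟨m, ⟨Set.mem_symmDiff.mpr (Or.inl ⟨hm, fun hmP => hnotP m hmP hwm⟩), hwm⟩, ?_⟩
    rintro g ⟨hg, hwg⟩
    rcases Set.mem_symmDiff.mp hg with ⟨hgM, -⟩ | ⟨hgP, -⟩
    · exact hM.2 w g hgM m hm hwg hwm
    · exact absurd hwg (hnotP g hgP)

end Backward

/-- Let `M` be a matching of a finite graph `G` with no alternating cycle and exactly two
unmatched vertices `u ≠ v`, and let `e = s(a, b) ∈ M`. Then `G − e` admits a perfect
matching if and only if there is an alternating path for `M` in `G` from `u` to `v`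
crossing the edge `e`. -/
theorem stmt9 {V : Type*} [Fintype V] (G : SimpleGraph V) (M : Set (Sym2 V))
    (hM : IsMatchingOf G M)
    (hnocycle : ¬ ∃ (w : V) (c : G.Walk w w), c.IsCycle ∧ CycleAlt M c)
    (u v : V) (huv : u ≠ v)
    (hunmatched : {w : V | ∀ e ∈ M, w ∉ e} = {u, v})
    (a b : V) (he : s(a, b) ∈ M) :
    (∃ N, IsPerfectMatchingOf (G.deleteEdges {s(a, b)}) N) ↔
      ∃ p : G.Walk u v, p.IsPath ∧
        p.edges.Chain' (fun e₁ e₂ => (e₁ ∈ M ↔ e₂ ∉ M)) ∧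
        s(a, b) ∈ p.edges := by
  simp only [isPerfectMatchingOf_deleteEdges_iff, Set.disjoint_singleton_right]
  constructor
  · rintro ⟨N, hN, heN⟩
    exact exists_isPath_alternating_of_isPerfectMatchingOf hM hnocycle hunmatched hN ⟨he, heN⟩
  · rintro ⟨p, hp, halt, hep⟩
    refine ⟨_, hM.isPerfectMatchingOf_symmDiff_edges huv hunmatched hp halt, ?_⟩
    simp [Set.mem_symmDiff, he, hep]
end

section
/- Let G be a finite graph, M a matching of G with no alternating cycle for M and with exactly two unmatched vertices u and v, let e = (a, b) ∈ M, and let M'' be a perfect matching of the graph G − e. Then the symmetric difference (M \ {e}) △ M'' is a vertex-disjoint union of two alternating paths for M \ {e} whose four endpoints are exactly u, v, a, b; moreover one of the two paths joins u to an endpoint of e and the other joins v to the other endpoint of e (in particular, no path of the decomposition joins a to b). -/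
/-!
Encode `M \ {e}` and `M''` by their partner maps: an involution `g` fixing exactly the four
vertices `u, v, a, b` left unmatched by `M \ {e}`, and a fixed-point-free involution `f`.
Starting at a fixed point `w` of `g` and applying `f, g, f, g, …` traces an alternating path of
the symmetric difference; it stops at the first odd step that reaches another fixed point of `g`,
and read backwards it is the path traced from that endpoint. So the paths pair up the four
fixed points. If `a` were paired with `b`, the path together with `e` would be an alternating
cycle for `M`; hence `u` and `v` are paired with the two ends of `e`. Any other vertex of the
symmetric difference lies on an `f`-`g` orbit without fixed points of `g`, i.e. on an
alternating cycle, which is excluded as well.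
-/

open Function

namespace AltSeq

variable {V : Type*}

section Definitions

variable (f g : V → V)

def altStep (n : ℕ) : V → V := if Even n then f else g

def altSeq (w : V) : ℕ → V
  | 0 => w
  | n + 1 => altStep f g n (altSeq w n)

-- `sInf ∅ = 0`: meaningful only once `exists_odd_fixed` provides an odd step reaching a fixed
-- point of `g`
noncomputable def altLen (w : V) : ℕ :=
  sInf {n | Odd n ∧ g (altSeq f g w n) = altSeq f g w n}

noncomputable def altEnd (w : V) : V := altSeq f g w (altLen f g w)

def altVerts (w : V) : Set V := {y | ∃ m ≤ altLen f g w, altSeq f g w m = y}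

end Definitions

variable {f g : V → V}

@[simp] lemma altSeq_zero (w : V) : altSeq f g w 0 = w := rfl

lemma altSeq_succ (w : V) (n : ℕ) : altSeq f g w (n + 1) = altStep f g n (altSeq f g w n) :=
  rfl

lemma altStep_of_even {n : ℕ} (hn : Even n) : altStep f g n = f := if_pos hn

lemma altStep_of_odd {n : ℕ} (hn : Odd n) : altStep f g n = g :=
  if_neg (Nat.not_even_iff_odd.2 hn)

lemma altStep_eq_of_even_add {i j : ℕ} (h : Even (i + j)) : altStep f g i = altStep f g j := by
  unfold altStep
  by_cases hi : Even i <;> simp [hi, ← Nat.even_add.1 h]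

lemma altStep_apply_of_eq {x : V} (h : f x = g x) (n : ℕ) : altStep f g n x = f x := by
  unfold altStep
  split_ifs <;> simp [h]

section Involutive

variable (hf : Involutive f) (hg : Involutive g)
include hf hg

lemma altStep_involutive (n : ℕ) : Involutive (altStep f g n) := by
  unfold altStep
  split_ifs <;> assumption

lemma altSeq_eq_altStep_succ (w : V) (n : ℕ) :
    altSeq f g w n = altStep f g n (altSeq f g w (n + 1)) :=
  (altStep_involutive hf hg n _).symm

lemma altSeq_mem_iff {S : Set V} (hfS : Set.MapsTo f S S) (hgS : Set.MapsTo g S S)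
    (w : V) (n : ℕ) : altSeq f g w n ∈ S ↔ w ∈ S := by
  have hS : ∀ n, Set.MapsTo (altStep f g n) S S := fun n => by
    unfold altStep
    split_ifs <;> assumption
  induction n with
  | zero => rfl
  | succ n ih =>
    refine ⟨fun h => ih.1 ?_, fun h => hS n (ih.2 h)⟩
    rw [altSeq_eq_altStep_succ hf hg]
    exact hS n h

lemma altSeq_eq_of_add_eq {w : V} {i j : ℕ} (hij : Even (i + j)) :
    ∀ k, altSeq f g w (i + k) = altSeq f g w (j + k) → altSeq f g w i = altSeq f g w j
  | 0, h => h
  | k + 1, h => by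
    refine altSeq_eq_of_add_eq hij k ?_
    rw [altSeq_eq_altStep_succ hf hg w (i + k), altSeq_eq_altStep_succ hf hg w (j + k),
      altStep_eq_of_even_add (i := i + k) (j := j + k) (by grind)]
    exact congrArg _ h

lemma f_altSeq_ne_g_of_ne {y : V} (hy : f y ≠ g y) (n : ℕ) :
    f (altSeq f g y n) ≠ g (altSeq f g y n) := by
  generalize hx : altSeq f g y n = x
  intro h
  -- a common edge `{x, f x}` is closed under both involutions, so the walk never leaves it
  have hfS : Set.MapsTo f {x, f x} {x, f x} := by
    rintro _ (rfl | rfl) <;> simp [hf _]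
  have hgS : Set.MapsTo g {x, f x} {x, f x} := by
    rintro _ (rfl | rfl) <;> simp [h, hg _]
  rcases (altSeq_mem_iff hf hg hfS hgS y n).1 (by simp [hx]) with rfl | rfl
  · exact hy h
  · exact hy (by rw [hf, h, hg])

variable (hf' : ∀ x, f x ≠ x)
include hf'

lemma altSeq_ne_of_odd_gap {w : V} :
    ∀ d i, (∀ k < i + 2 * d + 1, Odd k → g (altSeq f g w k) ≠ altSeq f g w k) →
      altSeq f g w i ≠ altSeq f g w (i + 2 * d + 1)
  | 0, i, hfix, h => by
    rw [altSeq_succ] at h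
    rcases Nat.even_or_odd i with hi | hi
    · rw [altStep_of_even hi] at h
      exact hf' _ h.symm
    · rw [altStep_of_odd hi] at h
      exact hfix i (by omega) hi h.symm
  | d + 1, i, hfix, h => by
    refine altSeq_ne_of_odd_gap d (i + 1) (fun k hk => hfix k (by omega)) ?_
    rw [show i + 1 + 2 * d + 1 = i + 2 * (d + 1) by ring, altSeq_succ, h,
      altSeq_eq_altStep_succ hf hg w (i + 2 * (d + 1)),
      altStep_eq_of_even_add (i := i) (j := i + 2 * (d + 1)) ⟨i + d + 1, by ring⟩]

lemma exists_altSeq_period [Finite V] {y : V}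
    (hfix : ∀ n, g (altSeq f g y n) ≠ altSeq f g y n) :
    ∃ L, 0 < L ∧ Even L ∧ altSeq f g y L = y ∧ Set.InjOn (altSeq f g y) (Set.Iio L) := by
  have hrep : ∃ j, ∃ i < j, altSeq f g y i = altSeq f g y j := by
    obtain ⟨i, j, hij, hne⟩ :=
      not_injective_iff.1 (not_injective_infinite_finite (altSeq f g y))
    rcases lt_or_gt_of_ne hne with h | h
    · exact ⟨j, i, h, hij⟩
    · exact ⟨i, j, h, hij.symm⟩
  classical
  obtain ⟨i, hi, hiL⟩ := Nat.find_spec hrep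
  set L := Nat.find hrep
  have hpar : Even (i + L) := by
    refine Nat.not_odd_iff_even.1 fun ⟨m, hm⟩ => ?_
    obtain ⟨d, hd⟩ : ∃ d, L = i + 2 * d + 1 := ⟨m - i, by omega⟩
    exact altSeq_ne_of_odd_gap hf hg hf' d i (fun k _ _ => hfix k) (hd ▸ hiL)
  have h0 : altSeq f g y 0 = altSeq f g y (L - i) :=
    altSeq_eq_of_add_eq hf hg (by grind) i (by rwa [zero_add, Nat.sub_add_cancel hi.le])
  obtain rfl : i = 0 := by
    by_contra hi0
    exact Nat.find_min hrep (show L - i < L by omega) ⟨0, by omega, h0⟩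
  refine ⟨L, hi, by simpa using hpar, hiL.symm, fun a ha b hb hab => ?_⟩
  by_contra hne
  rcases lt_or_gt_of_ne hne with h | h
  · exact Nat.find_min hrep hb ⟨a, h, hab⟩
  · exact Nat.find_min hrep ha ⟨b, h, hab.symm⟩

section Path

variable {w : V} (hw : g w = w)
include hw

lemma altSeq_ne_of_lt {i j : ℕ} (hij : i < j)
    (hfix : ∀ k < j, Odd k → g (altSeq f g w k) ≠ altSeq f g w k) :
    altSeq f g w i ≠ altSeq f g w j := by
  rcases Nat.even_or_odd (i + j) with hpar | ⟨m, hm⟩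
  · intro h
    obtain ⟨d, hd⟩ : ∃ d, j - i = 2 * d + 2 := ⟨(j - i) / 2 - 1, by grind⟩
    have h0 : altSeq f g w 0 = altSeq f g w (j - i) :=
      altSeq_eq_of_add_eq hf hg (by grind) i (by rwa [zero_add, Nat.sub_add_cancel hij.le])
    -- `g` fixes the start, so the even return to `w` is preceded by an odd one
    have h1 : altSeq f g w (2 * d + 1) = altSeq f g w 0 := by
      rw [altSeq_eq_altStep_succ hf hg, altStep_of_odd ⟨d, rfl⟩, ← hd, ← h0, altSeq_zero, hw]
    exact altSeq_ne_of_odd_gap hf hg hf' d 0 (fun k hk => hfix k (by omega))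
      (by simpa using h1.symm)
  · obtain ⟨d, rfl⟩ : ∃ d, j = i + 2 * d + 1 := ⟨m - i, by omega⟩
    exact altSeq_ne_of_odd_gap hf hg hf' d i hfix

lemma altSeq_injOn : Set.InjOn (altSeq f g w) (Set.Iic (altLen f g w)) := by
  have hfix : ∀ k < altLen f g w, Odd k → g (altSeq f g w k) ≠ altSeq f g w k :=
    fun k hk hodd hfix => Nat.notMem_of_lt_sInf hk ⟨hodd, hfix⟩
  intro i hi j hj hij
  by_contra hne
  rcases lt_or_gt_of_ne hne with hlt | hlt
  · exact altSeq_ne_of_lt hf hg hf' hw hlt (fun k hk => hfix k (lt_of_lt_of_le hk hj)) hij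
  · exact altSeq_ne_of_lt hf hg hf' hw hlt (fun k hk => hfix k (lt_of_lt_of_le hk hi)) hij.symm

variable [Finite V]

lemma exists_odd_fixed : ∃ n, Odd n ∧ g (altSeq f g w n) = altSeq f g w n := by
  by_contra! h
  refine not_injective_infinite_finite (altSeq f g w) fun i j hij => ?_
  by_contra hne
  rcases lt_or_gt_of_ne hne with hlt | hlt
  · exact altSeq_ne_of_lt hf hg hf' hw hlt (fun k _ => h k) hij
  · exact altSeq_ne_of_lt hf hg hf' hw hlt (fun k _ => h k) hij.symm

lemma odd_altLen : Odd (altLen f g w) := (Nat.sInf_mem (exists_odd_fixed hf hg hf' hw)).1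

lemma g_altEnd : g (altEnd f g w) = altEnd f g w :=
  (Nat.sInf_mem (exists_odd_fixed hf hg hf' hw)).2

lemma g_altSeq_eq_self_iff {m : ℕ} (hm : m ≤ altLen f g w) :
    g (altSeq f g w m) = altSeq f g w m ↔ m = 0 ∨ m = altLen f g w := by
  refine ⟨fun hfix => ?_, ?_⟩
  · by_contra! hint
    rcases Nat.even_or_odd m with heven | hodd
    · have hodd : Odd (m - 1) := by grind
      have : altSeq f g w (m - 1) = altSeq f g w m := by
        rw [altSeq_eq_altStep_succ hf hg, altStep_of_odd hodd, Nat.sub_add_cancel (by omega),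
          hfix]
      exact absurd (altSeq_injOn hf hg hf' hw (by simp; omega) (by simpa using hm) this)
        (by omega)
    · exact Nat.notMem_of_lt_sInf (lt_of_le_of_ne hm hint.2) ⟨hodd, hfix⟩
  · rintro (rfl | rfl)
    · exact hw
    · exact g_altEnd hf hg hf' hw

lemma f_altSeq_ne_g_of_le_altLen {m : ℕ} (hm : m ≤ altLen f g w) :
    f (altSeq f g w m) ≠ g (altSeq f g w m) := by
  intro h
  by_cases hend : m = 0 ∨ m = altLen f g w
  · exact hf' _ (h.trans ((g_altSeq_eq_self_iff hf hg hf' hw hm).2 hend))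
  push Not at hend
  -- at an interior vertex a common edge would make the walk step back
  have : altSeq f g w (m - 1) = altSeq f g w (m + 1) := by
    rw [altSeq_eq_altStep_succ hf hg, Nat.sub_add_cancel (by omega), altSeq_succ,
      altStep_apply_of_eq h, altStep_apply_of_eq h]
  have hlen := odd_altLen hf hg hf' hw
  exact absurd (altSeq_injOn hf hg hf' hw (by simp; omega) (by simp; grind) this) (by omega)

lemma altSeq_altEnd {j : ℕ} (hj : j ≤ altLen f g w) :
    altSeq f g (altEnd f g w) j = altSeq f g w (altLen f g w - j) := by
  induction j with
  | zero => rfl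
  | succ j ih =>
    have hlen := odd_altLen hf hg hf' hw
    rw [altSeq_succ, ih (by omega), altSeq_eq_altStep_succ hf hg w (altLen f g w - (j + 1)),
      show altLen f g w - (j + 1) + 1 = altLen f g w - j by omega,
      altStep_eq_of_even_add (i := j) (j := altLen f g w - (j + 1)) (by grind)]

lemma altLen_altEnd : altLen f g (altEnd f g w) = altLen f g w := by
  have hlen := odd_altLen hf hg hf' hw
  refine le_antisymm (Nat.sInf_le ⟨hlen, ?_⟩) (le_csInf ⟨_, hlen, ?_⟩ fun k ⟨hodd, hfix⟩ => ?_)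
  all_goals try rw [altSeq_altEnd hf hg hf' hw le_rfl, Nat.sub_self]; exact hw
  by_contra! hk
  rw [altSeq_altEnd hf hg hf' hw hk.le] at hfix
  have := (g_altSeq_eq_self_iff hf hg hf' hw (Nat.sub_le _ _)).1 hfix
  grind

lemma altEnd_altEnd : altEnd f g (altEnd f g w) = w := by
  rw [altEnd, altLen_altEnd hf hg hf' hw, altSeq_altEnd hf hg hf' hw le_rfl, Nat.sub_self,
    altSeq_zero]

lemma altEnd_ne : altEnd f g w ≠ w := fun h =>
  (odd_altLen hf hg hf' hw).pos.ne' <|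
    altSeq_injOn hf hg hf' hw (Set.mem_Iic.2 le_rfl) (Set.mem_Iic.2 (Nat.zero_le _)) h

lemma exists_lt_altLen_sym2_eq {m n : ℕ} (hm : m ≤ altLen f g w)
    (hn : altStep f g n (altSeq f g w m) ≠ altSeq f g w m) :
    ∃ i < altLen f g w, s(altSeq f g w i, altSeq f g w (i + 1)) =
      s(altSeq f g w m, altStep f g n (altSeq f g w m)) := by
  have hlen := odd_altLen hf hg hf' hw
  rcases Nat.even_or_odd (m + n) with h | h
  · rw [← altStep_eq_of_even_add h] at hn ⊢
    refine ⟨m, lt_of_le_of_ne hm fun hmN => hn ?_, rfl⟩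
    rw [altStep_of_odd (hmN ▸ hlen), hmN]
    exact g_altEnd hf hg hf' hw
  · obtain ⟨m, rfl⟩ : ∃ k, m = k + 1 := by
      refine Nat.exists_eq_add_one.2 (Nat.pos_of_ne_zero fun hm0 => hn ?_)
      rw [hm0, zero_add] at h
      rw [hm0, altStep_of_odd h, altSeq_zero, hw]
    refine ⟨m, by omega, ?_⟩
    rw [altSeq_eq_altStep_succ hf hg w m, altStep_eq_of_even_add (i := m) (j := n) (by grind),
      Sym2.eq_swap]

lemma mapsTo_altStep_altVerts (n : ℕ) :
    Set.MapsTo (altStep f g n) (altVerts f g w) (altVerts f g w) := by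
  rintro _ ⟨m, hm, rfl⟩
  by_cases h : altStep f g n (altSeq f g w m) = altSeq f g w m
  · exact ⟨m, hm, h.symm⟩
  obtain ⟨i, hi, he⟩ := exists_lt_altLen_sym2_eq hf hg hf' hw hm h
  rcases Sym2.eq_iff.1 he with ⟨-, h2⟩ | ⟨h1, -⟩
  · exact ⟨i + 1, hi, h2⟩
  · exact ⟨i, hi.le, h1⟩

lemma mapsTo_f_altVerts : Set.MapsTo f (altVerts f g w) (altVerts f g w) :=
  altStep_of_even (f := f) (g := g) (⟨0, rfl⟩ : Even 0) ▸ mapsTo_altStep_altVerts hf hg hf' hw 0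

lemma mapsTo_g_altVerts : Set.MapsTo g (altVerts f g w) (altVerts f g w) :=
  altStep_of_odd (f := f) (g := g) odd_one ▸ mapsTo_altStep_altVerts hf hg hf' hw 1

end Path

variable [Finite V]

lemma disjoint_altVerts {u v : V} (hu : g u = u) (hv : g v = v) (hvu : v ≠ u)
    (hvu' : v ≠ altEnd f g u) : Disjoint (altVerts f g u) (altVerts f g v) := by
  refine Set.disjoint_left.2 fun y hyu ⟨j, _, hj⟩ => ?_
  obtain ⟨m, hm, rfl⟩ := (altSeq_mem_iff hf hg (mapsTo_f_altVerts hf hg hf' hu)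
    (mapsTo_g_altVerts hf hg hf' hu) v j).1 (hj ▸ hyu)
  rcases (g_altSeq_eq_self_iff hf hg hf' hu hm).1 hv with rfl | rfl
  · exact hvu rfl
  · exact hvu' rfl

lemma altEnd_pairing {u v a b : V} (hfix : ∀ x, g x = x ↔ x = u ∨ x = v ∨ x = a ∨ x = b)
    (hab : a ≠ b) (hend : altEnd f g a ≠ b) :
    (altEnd f g u = a ∧ altEnd f g v = b) ∨ (altEnd f g u = b ∧ altEnd f g v = a) := by
  have key : ∀ x, g x = x → g (altEnd f g x) = altEnd f g x ∧ altEnd f g x ≠ x ∧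
      altEnd f g (altEnd f g x) = x := fun x hx =>
    ⟨g_altEnd hf hg hf' hx, altEnd_ne hf hg hf' hx, altEnd_altEnd hf hg hf' hx⟩
  have ha := key a ((hfix a).2 (by simp))
  have hb := key b ((hfix b).2 (by simp))
  rw [hfix] at ha hb
  grind

end Involutive

end AltSeq

lemma Set.InjOn.add_one_of_eq {V : Type*} {z : ℕ → V} {L : ℕ} (hinj : Set.InjOn z (Set.Iio L))
    (hL : 0 < L) (hz : z L = z 0) : Set.InjOn (fun i => z (i + 1)) (Set.Iio L) := by
  intro a (ha : a < L) b (hb : b < L) hab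
  have key : ∀ k < L, z (k + 1) = z ((k + 1) % L) := fun k hk => by
    rcases Nat.lt_or_eq_of_le (show k + 1 ≤ L by omega) with h | h
    · rw [Nat.mod_eq_of_lt h]
    · rw [h, Nat.mod_self, hz]
  have hmod : (a + 1) % L = (b + 1) % L :=
    hinj (Nat.mod_lt _ hL) (Nat.mod_lt _ hL) (by rw [← key a ha, ← key b hb]; exact hab)
  rcases Nat.lt_or_eq_of_le (show a + 1 ≤ L by omega) with h | h <;>
    rcases Nat.lt_or_eq_of_le (show b + 1 ≤ L by omega) with h' | h' <;>
    simp only [Nat.mod_eq_of_lt, h, h', Nat.mod_self] at hmod <;> omega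

namespace SimpleGraph

variable {V : Type*} {G : SimpleGraph V}

lemma exists_walk_of_forall_adj (z : ℕ → V) :
    ∀ n, (∀ m < n, G.Adj (z m) (z (m + 1))) →
      ∃ p : G.Walk (z 0) (z n), p.support = (List.range (n + 1)).map z ∧
        p.edges = (List.range n).map fun i => s(z i, z (i + 1))
  | 0, _ => ⟨Walk.nil, by simp, by simp⟩
  | n + 1, h => by
    obtain ⟨p, hs, he⟩ := exists_walk_of_forall_adj z n fun m hm => h m (by omega)
    refine ⟨p.concat (h n (by omega)), ?_, ?_⟩
    · rw [Walk.support_concat, hs, List.range_succ (n := n + 1), List.map_append]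
      simp
    · rw [Walk.edges_concat, he, List.range_succ, List.map_append]
      simp

lemma isChain_mem_iff_not_mem_of_odd {M : Set (Sym2 V)} {z : ℕ → V} {n : ℕ}
    (halt : ∀ m < n, (s(z m, z (m + 1)) ∈ M ↔ Odd m)) :
    ((List.range n).map fun i => s(z i, z (i + 1))).IsChain fun e₁ e₂ => (e₁ ∈ M ↔ e₂ ∉ M) := by
  rw [List.isChain_map, List.isChain_range]
  intro m hm
  rw [halt m (by omega), halt (m + 1) (by omega), Nat.odd_add_one, not_not]

lemma exists_isCycle_cycleAlt {M : Set (Sym2 V)} (z : ℕ → V) {L : ℕ} (hL : 0 < L)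
    (hLe : Even L) (hz : z L = z 0) (hadj : ∀ m < L, G.Adj (z m) (z (m + 1)))
    (hinj : Set.InjOn z (Set.Iio L)) (halt : ∀ m < L, (s(z m, z (m + 1)) ∈ M ↔ Odd m)) :
    ∃ (w : V) (c : G.Walk w w), c.IsCycle ∧ CycleAlt M c := by
  obtain ⟨c, hs, he⟩ : ∃ c : G.Walk (z 0) (z 0), c.support = (List.range (L + 1)).map z ∧
      c.edges = (List.range L).map fun i => s(z i, z (i + 1)) := by
    obtain ⟨c, hs, he⟩ := exists_walk_of_forall_adj z L hadj
    exact ⟨c.copy rfl hz, by simpa using hs, by simpa using he⟩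
  have hlenE : c.edges.length = L := by simp [he]
  have hlen : c.length = L := c.length_edges ▸ hlenE
  -- for `L = 2` the two edges coincide, which `halt` rules out
  have hL3 : 3 ≤ L := by
    by_contra hlt
    obtain rfl : L = 2 := by grind
    have h1 := halt 1 (by omega)
    rw [hz, Sym2.eq_swap, halt 0 (by omega)] at h1
    simp at h1
  have hget : ∀ i (hi : i < c.edges.length), c.edges.get ⟨i, hi⟩ = s(z i, z (i + 1)) := by
    intro i hi
    simp only [he, List.get_eq_getElem, List.getElem_map, List.getElem_range]
  refine ⟨z 0, c, ?_, fun ⟨i, hi⟩ => ?_⟩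
  · rw [Walk.isCycle_iff_isPath_tail_and_le_length, hlen,
      Walk.isPath_def, Walk.support_tail_of_not_nil _ (Walk.not_nil_iff_lt_length.2 (by omega))]
    refine ⟨?_, hL3⟩
    rw [hs, List.range_succ_eq_map, List.map_cons, List.tail_cons, List.map_map]
    exact List.Nodup.map_on (fun a ha b hb => hinj.add_one_of_eq hL hz
      (List.mem_range.1 ha) (List.mem_range.1 hb)) List.nodup_range
  · rw [hget, hget, halt i (by omega), halt _ (hlenE ▸ Nat.mod_lt _ (by omega))]
    show Odd i ↔ ¬Odd ((i + 1) % c.edges.length)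
    rw [hlenE]
    rcases Nat.lt_or_eq_of_le (show i + 1 ≤ L by omega) with h | h
    · rw [Nat.mod_eq_of_lt h, Nat.odd_add_one, not_not]
    · rw [h, Nat.mod_self]
      grind

end SimpleGraph

section Partner

variable {V : Type*} {G : SimpleGraph V} {M : Set (Sym2 V)}

lemma IsMatchingOf.mono {N : Set (Sym2 V)} (hM : IsMatchingOf G M) (hN : N ⊆ M) :
    IsMatchingOf G N :=
  ⟨hN.trans hM.1, fun v _ he _ hf => hM.2 v _ (hN he) _ (hN hf)⟩

lemma IsMatchingOf.exists_partner (hM : IsMatchingOf G M) :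
    ∃ g : V → V, Function.Involutive g ∧ ∀ x y, s(x, y) ∈ M ↔ x ≠ y ∧ g x = y := by
  classical
  have huniq : ∀ x y y', s(x, y) ∈ M → s(x, y') ∈ M → y = y' := fun x y y' h h' =>
    Sym2.congr_right.1 (hM.2 x _ h _ h' (Sym2.mem_mk_left _ _) (Sym2.mem_mk_left _ _))
  let g x := if h : ∃ y, s(x, y) ∈ M then h.choose else x
  have hg : ∀ x y, s(x, y) ∈ M → g x = y := fun x y h => by
    have hex : ∃ y, s(x, y) ∈ M := ⟨y, h⟩
    simpa only [g, dif_pos hex] using huniq _ _ _ hex.choose_spec h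
  have hgM : ∀ x, g x ≠ x → s(x, g x) ∈ M := fun x hx => by
    by_cases hex : ∃ y, s(x, y) ∈ M
    · obtain ⟨y, hy⟩ := hex
      rwa [hg x y hy]
    · simp [g, hex] at hx
  refine ⟨g, fun x => ?_, fun x y => ⟨fun h => ⟨G.ne_of_adj (hM.1 h), hg x y h⟩, ?_⟩⟩
  · by_cases hx : g x = x
    · rw [hx, hx]
    · exact hg _ _ (Sym2.eq_swap ▸ hgM x hx)
  · rintro ⟨hxy, rfl⟩
    exact hgM x hxy.symm

lemma partner_eq_self_iff {g : V → V} (hg : ∀ x y, s(x, y) ∈ M ↔ x ≠ y ∧ g x = y) (x : V) :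
    g x = x ↔ ∀ e ∈ M, x ∉ e := by
  refine ⟨fun hx e he hxe => ?_, fun h => by_contra fun hx => h _ ((hg x _).2 ⟨Ne.symm hx, rfl⟩)
    (Sym2.mem_mk_left _ _)⟩
  obtain ⟨y, rfl⟩ := Sym2.mem_iff_exists.1 hxe
  obtain ⟨hxy, rfl⟩ := (hg x y).1 he
  exact hxy hx.symm

lemma IsMatchingOf.forall_notMem_diff_singleton_iff (hM : IsMatchingOf G M) {e : Sym2 V}
    (he : e ∈ M) (x : V) : (∀ e' ∈ M \ {e}, x ∉ e') ↔ (∀ e' ∈ M, x ∉ e') ∨ x ∈ e := by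
  refine ⟨fun h => or_iff_not_imp_right.2 fun hx e' he' hxe' => ?_, ?_⟩
  · exact h e' ⟨he', fun h' => hx (h' ▸ hxe')⟩ hxe'
  · rintro (h | h) e' ⟨he', hne⟩ hxe'
    · exact h e' he' hxe'
    · exact hne (hM.2 x e' he' e he hxe' h)

lemma IsPerfectMatchingOf.isMatchingOf_s10 (hM : IsPerfectMatchingOf G M) : IsMatchingOf G M :=
  ⟨hM.1, fun v _ he _ hf hve hvf => (hM.2 v).unique ⟨he, hve⟩ ⟨hf, hvf⟩⟩

lemma IsPerfectMatchingOf.exists_partner (hM : IsPerfectMatchingOf G M) :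
    ∃ f : V → V, Function.Involutive f ∧ (∀ x, f x ≠ x) ∧ ∀ x y, s(x, y) ∈ M ↔ f x = y := by
  obtain ⟨f, hf, hfM⟩ := hM.isMatchingOf_s10.exists_partner
  have hfix : ∀ x, f x ≠ x := fun x hx =>
    let ⟨_, ⟨he, hxe⟩, _⟩ := hM.2 x
    (partner_eq_self_iff hfM x).1 hx _ he hxe
  exact ⟨f, hf, hfix, fun x y => ⟨fun h => ((hfM x y).1 h).2,
    fun h => (hfM x y).2 ⟨h ▸ (hfix x).symm, h⟩⟩⟩

end Partner

namespace AltSeq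

variable {V : Type*} {G : SimpleGraph V} {M M'' : Set (Sym2 V)} {e₀ : Sym2 V} {f g : V → V}
  (hf : Involutive f) (hg : Involutive g) (hf' : ∀ x, f x ≠ x)
  (hM₁ : ∀ x y, s(x, y) ∈ M \ {e₀} ↔ x ≠ y ∧ g x = y) (hM'' : ∀ x y, s(x, y) ∈ M'' ↔ f x = y)
  (he₀ : e₀ ∉ M'')

include hf' hM₁ hM'' in
lemma exists_altStep_of_mem_symmDiff {x y : V} (h : s(x, y) ∈ symmDiff (M \ {e₀}) M'') :
    f x ≠ g x ∧ ∃ n, altStep f g n x = y ∧ y ≠ x := by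
  rw [Set.mem_symmDiff, hM₁, hM''] at h
  rcases h with ⟨⟨hxy, rfl⟩, hfg⟩ | ⟨rfl, hfg⟩
  · exact ⟨hfg, 1, altStep_of_odd odd_one ▸ rfl, hxy.symm⟩
  · refine ⟨fun h => hfg ⟨(hf' x).symm, h.symm⟩, 0, ?_, hf' x⟩
    rw [altStep_of_even ⟨0, rfl⟩]

include hM₁ hM'' he₀ in
lemma altSeq_edge_mem_iff {w : V} {m : ℕ}
    (hodd : Odd m → g (altSeq f g w m) ≠ altSeq f g w m)
    (hfg : f (altSeq f g w m) ≠ g (altSeq f g w m)) :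
    (s(altSeq f g w m, altSeq f g w (m + 1)) ∈ M \ {e₀} ↔ Odd m) ∧
      (s(altSeq f g w m, altSeq f g w (m + 1)) ∈ M'' ↔ Even m) ∧
      (s(altSeq f g w m, altSeq f g w (m + 1)) ∈ M ↔ Odd m) := by
  have h₁₂ : (s(altSeq f g w m, altSeq f g w (m + 1)) ∈ M \ {e₀} ↔ Odd m) ∧
      (s(altSeq f g w m, altSeq f g w (m + 1)) ∈ M'' ↔ Even m) := by
    rw [altSeq_succ, hM₁, hM'']
    rcases Nat.even_or_odd m with h | h
    · simp [altStep_of_even h, h, Ne.symm hfg, Nat.not_odd_iff_even.2 h]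
    · simp [altStep_of_odd h, h, hfg, Ne.symm (hodd h), Nat.not_even_iff_odd.2 h]
  refine ⟨h₁₂.1, h₁₂.2, fun h => by_contra fun hm => ?_, fun h => (h₁₂.1.2 h).1⟩
  have heq : s(altSeq f g w m, altSeq f g w (m + 1)) = e₀ := by
    by_contra hne
    exact hm (h₁₂.1.1 ⟨h, hne⟩)
  exact he₀ (heq ▸ h₁₂.2.2 (Nat.not_odd_iff_even.1 hm))

variable [Finite V]
include hf hg hf' hM₁ hM'' he₀

lemma altLen_edge_mem_iff {w : V} (hw : g w = w) {m : ℕ} (hm : m < altLen f g w) :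
    (s(altSeq f g w m, altSeq f g w (m + 1)) ∈ M \ {e₀} ↔ Odd m) ∧
      (s(altSeq f g w m, altSeq f g w (m + 1)) ∈ M'' ↔ Even m) ∧
      (s(altSeq f g w m, altSeq f g w (m + 1)) ∈ M ↔ Odd m) :=
  altSeq_edge_mem_iff hM₁ hM'' he₀
    (fun hodd hfix => by
      have := (g_altSeq_eq_self_iff hf hg hf' hw hm.le).1 hfix
      grind)
    (f_altSeq_ne_g_of_le_altLen hf hg hf' hw hm.le)

lemma mem_symmDiff_of_lt_altLen {w : V} (hw : g w = w) {m : ℕ} (hm : m < altLen f g w) :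
    s(altSeq f g w m, altSeq f g w (m + 1)) ∈ symmDiff (M \ {e₀}) M'' := by
  obtain ⟨h₁, h₂, -⟩ := altLen_edge_mem_iff hf hg hf' hM₁ hM'' he₀ hw hm
  rw [Set.mem_symmDiff, h₁, h₂, Nat.not_even_iff_odd, Nat.not_odd_iff_even]
  exact (Nat.even_or_odd m).symm.imp (fun h => ⟨h, h⟩) (fun h => ⟨h, h⟩)

variable (hMG : M ⊆ G.edgeSet) (hM''G : M'' ⊆ G.edgeSet)
include hMG hM''G

lemma exists_altPath {w : V} (hw : g w = w) :
    ∃ p : G.Walk w (altEnd f g w), p.IsPath ∧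
      p.edges.IsChain (fun e₁ e₂ => (e₁ ∈ M \ {e₀} ↔ e₂ ∉ M \ {e₀})) ∧
      (∀ y, y ∈ p.support ↔ y ∈ altVerts f g w) ∧
      ∀ e, e ∈ p.edges ↔ ∃ m < altLen f g w, s(altSeq f g w m, altSeq f g w (m + 1)) = e := by
  have hedge := fun m (hm : m < altLen f g w) =>
    altLen_edge_mem_iff hf hg hf' hM₁ hM'' he₀ hw hm
  obtain ⟨p, hs, he⟩ : ∃ p : G.Walk w (altEnd f g w),
      p.support = (List.range (altLen f g w + 1)).map (altSeq f g w) ∧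
      p.edges =
        (List.range (altLen f g w)).map fun i => s(altSeq f g w i, altSeq f g w (i + 1)) :=
    SimpleGraph.exists_walk_of_forall_adj (altSeq f g w) (altLen f g w) fun m hm => by
      rcases Nat.even_or_odd m with h | h
      · exact hM''G ((hedge m hm).2.1.2 h)
      · exact hMG ((hedge m hm).2.2.2 h)
  refine ⟨p, ?_, ?_, fun y => ?_, fun e => ?_⟩
  · rw [SimpleGraph.Walk.isPath_def, hs]
    refine List.Nodup.map_on (fun a ha b hb => altSeq_injOn hf hg hf' hw ?_ ?_)
      List.nodup_range
    · simpa [Nat.lt_add_one_iff] using ha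
    · simpa [Nat.lt_add_one_iff] using hb
  · rw [he]
    exact SimpleGraph.isChain_mem_iff_not_mem_of_odd fun m hm => (hedge m hm).1
  · simp [hs, altVerts]
  · simp [he]

lemma exists_cycle_of_altEnd {a : V} (ha : g a = a) (he : s(a, altEnd f g a) ∈ M) :
    ∃ (w : V) (c : G.Walk w w), c.IsCycle ∧ CycleAlt M c := by
  set N := altLen f g a
  have hN := odd_altLen hf hg hf' ha
  have hedge := fun m (hm : m < N) => altLen_edge_mem_iff hf hg hf' hM₁ hM'' he₀ ha hm
  let z n := if n ≤ N then altSeq f g a n else a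
  have hz : ∀ n ≤ N, z n = altSeq f g a n := fun n hn => if_pos hn
  have hlast : s(z N, z (N + 1)) = s(a, altEnd f g a) := by
    simp [z, N, altEnd, Sym2.eq_swap]
  have hmem : ∀ m < N + 1, (s(z m, z (m + 1)) ∈ M ↔ Odd m) ∧ s(z m, z (m + 1)) ∈ M ∪ M'' := by
    intro m hm
    rcases Nat.lt_or_eq_of_le (Nat.le_of_lt_succ hm) with hm | rfl
    · rw [hz m hm.le, hz (m + 1) hm]
      refine ⟨(hedge m hm).2.2, ?_⟩
      rcases Nat.even_or_odd m with h | h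
      · exact Or.inr ((hedge m hm).2.1.2 h)
      · exact Or.inl ((hedge m hm).2.2.2 h)
    · rw [hlast]
      exact ⟨iff_of_true he hN, Or.inl he⟩
  refine SimpleGraph.exists_isCycle_cycleAlt z (by omega) hN.add_one (by simp [z, N])
    (fun m hm => Set.union_subset hMG hM''G (hmem m hm).2) (fun i hi j hj hij => ?_)
    (fun m hm => (hmem m hm).1)
  rw [Set.mem_Iio, Nat.lt_add_one_iff] at hi hj
  rw [hz i hi, hz j hj] at hij
  exact altSeq_injOn hf hg hf' ha hi hj hij

lemma exists_cycle_of_not_mem {S : Set V} (hfS : Set.MapsTo f S S) (hgS : Set.MapsTo g S S)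
    (hfix : ∀ x, g x = x → x ∈ S) {y : V} (hy : y ∉ S) (hfy : f y ≠ g y) :
    ∃ (w : V) (c : G.Walk w w), c.IsCycle ∧ CycleAlt M c := by
  have hnS : ∀ n, altSeq f g y n ∉ S := fun n h => hy ((altSeq_mem_iff hf hg hfS hgS y n).1 h)
  obtain ⟨L, hL, hLe, hLy, hinj⟩ := exists_altSeq_period hf hg hf' fun n h => hnS n (hfix _ h)
  have hedge := fun m => altSeq_edge_mem_iff hM₁ hM'' he₀ (fun _ h => hnS m (hfix _ h))
    (f_altSeq_ne_g_of_ne hf hg hfy m)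
  refine SimpleGraph.exists_isCycle_cycleAlt _ hL hLe hLy (fun m _ => ?_) hinj
    (fun m _ => (hedge m).2.2)
  rcases Nat.even_or_odd m with h | h
  · exact hM''G ((hedge m).2.1.2 h)
  · exact hMG ((hedge m).2.2.2 h)

theorem exists_altPaths (hnocycle : ¬ ∃ (w : V) (c : G.Walk w w), c.IsCycle ∧ CycleAlt M c)
    {u v : V} (hu : g u = u) (hv : g v = v) (hvu : v ≠ u) (hvu' : v ≠ altEnd f g u)
    (hfix : ∀ x, g x = x → x = u ∨ x = v ∨ x = altEnd f g u ∨ x = altEnd f g v) :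
    ∃ (p : G.Walk u (altEnd f g u)) (q : G.Walk v (altEnd f g v)),
      p.IsPath ∧ q.IsPath ∧
      p.edges.IsChain (fun e₁ e₂ => (e₁ ∈ M \ {e₀} ↔ e₂ ∉ M \ {e₀})) ∧
      q.edges.IsChain (fun e₁ e₂ => (e₁ ∈ M \ {e₀} ↔ e₂ ∉ M \ {e₀})) ∧
      List.Disjoint p.support q.support ∧
      {e | e ∈ p.edges ∨ e ∈ q.edges} = symmDiff (M \ {e₀}) M'' := by
  obtain ⟨p, hp, hpc, hps, hpe⟩ := exists_altPath hf hg hf' hM₁ hM'' he₀ hMG hM''G hu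
  obtain ⟨q, hq, hqc, hqs, hqe⟩ := exists_altPath hf hg hf' hM₁ hM'' he₀ hMG hM''G hv
  refine ⟨p, q, hp, hq, hpc, hqc, fun y hyp hyq => ?_, ?_⟩
  · exact Set.disjoint_left.1 (disjoint_altVerts hf hg hf' hu hv hvu hvu') ((hps y).1 hyp)
      ((hqs y).1 hyq)
  ext e
  induction e using Sym2.ind with
  | _ x y =>
  simp only [Set.mem_ofPred_eq, hpe, hqe]
  refine ⟨?_, fun h => ?_⟩
  · rintro (⟨m, hm, h⟩ | ⟨m, hm, h⟩) <;> rw [← h]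
    · exact mem_symmDiff_of_lt_altLen hf hg hf' hM₁ hM'' he₀ hu hm
    · exact mem_symmDiff_of_lt_altLen hf hg hf' hM₁ hM'' he₀ hv hm
  obtain ⟨hfg, n, rfl, hn⟩ := exists_altStep_of_mem_symmDiff hf' hM₁ hM'' h
  -- a vertex of the symmetric difference off both paths would lie on an alternating cycle
  have hx : x ∈ altVerts f g u ∪ altVerts f g v := by
    by_contra hx
    refine hnocycle (exists_cycle_of_not_mem hf hg hf' hM₁ hM'' he₀ hMG hM''G
      ((mapsTo_f_altVerts hf hg hf' hu).union_union (mapsTo_f_altVerts hf hg hf' hv))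
      ((mapsTo_g_altVerts hf hg hf' hu).union_union (mapsTo_g_altVerts hf hg hf' hv))
      (fun x hx => ?_) hx hfg)
    rcases hfix x hx with rfl | rfl | rfl | rfl
    exacts [Or.inl ⟨0, by simp⟩, Or.inr ⟨0, by simp⟩, Or.inl ⟨_, le_rfl, rfl⟩,
      Or.inr ⟨_, le_rfl, rfl⟩]
  rcases hx with ⟨m, hm, rfl⟩ | ⟨m, hm, rfl⟩
  · exact Or.inl (exists_lt_altLen_sym2_eq hf hg hf' hu hm hn)
  · exact Or.inr (exists_lt_altLen_sym2_eq hf hg hf' hv hm hn)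

end AltSeq

open AltSeq in
/-- Let `M` be a matching of a finite graph `G` with no alternating cycle and exactly two
unmatched vertices `u ≠ v`, let `e = s(a, b) ∈ M`, and let `M''` be a perfect matching
of `G − e`. Then `(M \ {e}) △ M''` is a vertex-disjoint union of two alternating paths
for `M \ {e}`, one joining `u` to one endpoint of `e` and the other joining `v` to the
other endpoint of `e`. -/
theorem stmt10 {V : Type*} [Fintype V] (G : SimpleGraph V) (M : Set (Sym2 V))
    (hM : IsMatchingOf G M)
    (hnocycle : ¬ ∃ (w : V) (c : G.Walk w w), c.IsCycle ∧ CycleAlt M c)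
    (u v : V) (huv : u ≠ v)
    (hunmatched : {w : V | ∀ e ∈ M, w ∉ e} = {u, v})
    (a b : V) (he : s(a, b) ∈ M)
    (M'' : Set (Sym2 V)) (hM'' : IsPerfectMatchingOf (G.deleteEdges {s(a, b)}) M'') :
    ∃ (c d : V), s(c, d) = s(a, b) ∧
      ∃ (p : G.Walk u c) (q : G.Walk v d),
        p.IsPath ∧ q.IsPath ∧
        p.edges.Chain' (fun e₁ e₂ => (e₁ ∈ M \ {s(a, b)} ↔ e₂ ∉ M \ {s(a, b)})) ∧
        q.edges.Chain' (fun e₁ e₂ => (e₁ ∈ M \ {s(a, b)} ↔ e₂ ∉ M \ {s(a, b)})) ∧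
        List.Disjoint p.support q.support ∧
        {e | e ∈ p.edges ∨ e ∈ q.edges} = symmDiff (M \ {s(a, b)}) M'' := by
  obtain ⟨g, hg, hM₁⟩ := (hM.mono (Set.sdiff_subset (t := {s(a, b)}))).exists_partner
  obtain ⟨f, hf, hf', hM''f⟩ := hM''.exists_partner
  have hM''G' : M'' ⊆ G.edgeSet \ {s(a, b)} := G.edgeSet_deleteEdges _ ▸ hM''.1
  have hM''G : M'' ⊆ G.edgeSet := fun _ h => (hM''G' h).1
  have he₀ : s(a, b) ∉ M'' := fun h => (hM''G' h).2 rfl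
  have hunm : ∀ x, (∀ e ∈ M, x ∉ e) ↔ x = u ∨ x = v := fun x => by
    simpa using Set.ext_iff.1 hunmatched x
  have hfix : ∀ x, g x = x ↔ x = u ∨ x = v ∨ x = a ∨ x = b := fun x => by
    rw [partner_eq_self_iff hM₁, hM.forall_notMem_diff_singleton_iff he, hunm, Sym2.mem_iff,
      or_assoc]
  have hab : a ≠ b := G.ne_of_adj (hM.1 he)
  have hend : altEnd f g a ≠ b := fun h => hnocycle <|
    exists_cycle_of_altEnd hf hg hf' hM₁ hM''f he₀ hM.1 hM''G ((hfix a).2 (by simp)) (h ▸ he)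
  have hva : v ≠ a := fun h => (hunm v).2 (Or.inr rfl) _ he (h ▸ Sym2.mem_mk_left _ _)
  have hvb : v ≠ b := fun h => (hunm v).2 (Or.inr rfl) _ he (h ▸ Sym2.mem_mk_right _ _)
  have hpair := altEnd_pairing hf hg hf' hfix hab hend
  have hcd : s(altEnd f g u, altEnd f g v) = s(a, b) := by
    rcases hpair with ⟨h₁, h₂⟩ | ⟨h₁, h₂⟩ <;> simp [h₁, h₂]
  have hvu : v ≠ altEnd f g u := by grind
  have hfix' : ∀ x, g x = x → x = u ∨ x = v ∨ x = altEnd f g u ∨ x = altEnd f g v := by grind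
  exact ⟨_, _, hcd, exists_altPaths hf hg hf' hM₁ hM''f he₀ hM.1 hM''G hnocycle
    ((hfix u).2 (by simp)) ((hfix v).2 (by simp)) huv.symm hvu hfix'⟩
end
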